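/- arXiv:1101.2589 — 12 statements merged into one kernel-verified Lean document; each statement's English description precedes it below -/
import Mathlib

section
/- Let S be a finite union-closed family of finite sets with |S| = m ≥ 1. Then the total weight satisfies w(S) = ∑_{A ∈ S} |A| ≥ (m · log₂ m)/2, with equality if and only if S is the powerset of some finite set. -/
/-!
Let `X = ⋃ S`, which lies in `S`. Reimer's up-compressions produce a map `ψ` with
`A ⊆ ψ A ⊆ X` such that the intervals `[A, ψ A]` are pairwise disjoint and `{ψ A | A ∈ S}` is an
up-set of `2^X`; the invariant that keeps the intervals disjoint under compression is that the
image stays closed under `· ∪ B` for `B ∈ S`, which holds at the start because `S` is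
union-closed.

Disjointness gives `∑ 2^(|ψ A| - |A|) ≤ 2^|X|`, so by convexity of `2^t`,
`∑ (|ψ A| - |A|) ≤ m (|X| - log₂ m)`. The complements `X \ ψ A` form a down-set of size `m`, and a
down-set of size `m` has weight at most `(m log₂ m)/2` (split along one element and induct), so
`∑ |ψ A| ≥ m |X| - (m log₂ m)/2`. Subtracting gives the bound.

At equality every `|ψ A| - |A|` equals `|X| - log₂ m` (strict convexity); for `A = X` it is `0`,
so `m = 2^|X|` and `S` is all of `2^X`. Conversely a powerset is itself a down-set, so the
down-set bound gives the reverse inequality.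
-/

open Finset Real

theorem mul_logb_add_mul_logb_add_two_mul_le {a b : ℝ} (hb : 0 ≤ b) (hba : b ≤ a) :
    a * logb 2 a + b * logb 2 b + 2 * b ≤ (a + b) * logb 2 (a + b) := by
  rcases hb.eq_or_lt with rfl | hb
  · simp
  have ha : 0 < a := hb.trans_le hba
  have h₁ : b ≤ a * logb 2 ((a + b) / a) := by
    -- Bernoulli: `2 ^ t ≤ 1 + t` for `t ∈ [0, 1]`
    have hba' : b / a ≤ logb 2 (1 + b / a) := by
      rw [le_logb_iff_rpow_le one_lt_two (by positivity)]
      simpa [one_add_one_eq_two] using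
        rpow_one_add_le_one_add_mul_self (s := 1) (by norm_num) (by positivity)
          ((div_le_one ha).2 hba)
    rw [add_div, div_self ha.ne']
    calc b = a * (b / a) := by field_simp
      _ ≤ _ := mul_le_mul_of_nonneg_left hba' ha.le
  have h₂ : b ≤ b * logb 2 ((a + b) / b) := by
    refine le_mul_of_one_le_right hb.le ?_
    rw [le_logb_iff_rpow_le one_lt_two (by positivity), rpow_one, le_div_iff₀ hb]
    linarith
  rw [logb_div (by positivity) ha.ne'] at h₁
  rw [logb_div (by positivity) hb.ne'] at h₂
  linarith

theorem two_rpow_eq_mul_exp (c t : ℝ) : (2 : ℝ) ^ t = 2 ^ c * exp (log 2 * (t - c)) := by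
  rw [rpow_def_of_pos two_pos, rpow_def_of_pos two_pos, ← exp_add]
  ring_nf

theorem two_rpow_tangent_le (c t : ℝ) : 2 ^ c * (1 + log 2 * (t - c)) ≤ (2 : ℝ) ^ t := by
  rw [two_rpow_eq_mul_exp c t, add_comm]
  exact mul_le_mul_of_nonneg_left (add_one_le_exp _) (by positivity)

theorem two_rpow_tangent_lt {c t : ℝ} (h : t ≠ c) :
    2 ^ c * (1 + log 2 * (t - c)) < (2 : ℝ) ^ t := by
  rw [two_rpow_eq_mul_exp c t, add_comm]
  exact mul_lt_mul_of_pos_left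
    (add_one_lt_exp (mul_ne_zero (log_pos one_lt_two).ne' (sub_ne_zero.2 h))) (by positivity)

section Jensen

variable {ι : Type*} {s : Finset ι} {d : ι → ℝ} {c : ℝ}

theorem sum_two_rpow_tangent (s : Finset ι) (d : ι → ℝ) (c : ℝ) :
    ∑ i ∈ s, 2 ^ c * (1 + log 2 * (d i - c)) =
      #s * 2 ^ c + 2 ^ c * log 2 * (∑ i ∈ s, d i - #s * c) := by
  simp only [mul_add, mul_one, sum_add_distrib, ← mul_sum, sum_sub_distrib, sum_const,
    nsmul_eq_mul]
  ring

theorem sum_le_card_mul_of_sum_two_rpow_le (h : ∑ i ∈ s, (2 : ℝ) ^ d i ≤ #s * 2 ^ c) :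
    ∑ i ∈ s, d i ≤ #s * c := by
  have := (sum_le_sum fun i _ ↦ two_rpow_tangent_le c (d i)).trans h
  rw [sum_two_rpow_tangent] at this
  have : 0 < (2 : ℝ) ^ c * log 2 := by have := log_pos one_lt_two; positivity
  nlinarith

theorem eq_of_sum_two_rpow_le_of_card_mul_le_sum (h : ∑ i ∈ s, (2 : ℝ) ^ d i ≤ #s * 2 ^ c)
    (h' : #s * c ≤ ∑ i ∈ s, d i) : ∀ i ∈ s, d i = c := by
  by_contra! ⟨i, hi, hic⟩
  have := (sum_lt_sum (fun j _ ↦ two_rpow_tangent_le c (d j))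
    ⟨i, hi, two_rpow_tangent_lt hic⟩).trans_le h
  rw [sum_two_rpow_tangent] at this
  have : 0 < (2 : ℝ) ^ c * log 2 := by have := log_pos one_lt_two; positivity
  nlinarith

end Jensen

section SetFamily

variable {α : Type*} [DecidableEq α]

theorem Finset.sum_card_memberSubfamily_add_sum_card_nonMemberSubfamily (a : α)
    (𝒜 : Finset (Finset α)) :
    ∑ s ∈ 𝒜.memberSubfamily a, (#s + 1) + ∑ s ∈ 𝒜.nonMemberSubfamily a, #s = ∑ s ∈ 𝒜, #s := by
  have hinj : Set.InjOn (insert a) (𝒜.memberSubfamily a : Set (Finset α)) :=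
    fun s hs t ht hst ↦ by
      rw [← erase_insert (mem_memberSubfamily.1 hs).2, ← erase_insert (mem_memberSubfamily.1 ht).2,
        hst]
  rw [← sum_filter_add_sum_filter_not 𝒜 (a ∈ ·), ← image_insert_memberSubfamily,
    sum_image hinj, nonMemberSubfamily]
  congr 1
  exact sum_congr rfl fun s hs ↦ (card_insert_of_notMem (mem_memberSubfamily.1 hs).2).symm

theorem IsLowerSet.sum_card_le {𝒜 : Finset (Finset α)} (h𝒜 : IsLowerSet (𝒜 : Set (Finset α))) :
    ∑ s ∈ 𝒜, (#s : ℝ) ≤ #𝒜 * logb 2 #𝒜 / 2 := by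
  induction 𝒜 using memberFamily_induction_on with
  | empty => simp
  | singleton_empty => simp
  | @subfamily a 𝒜 ih₀ ih₁ =>
    have hsum := sum_card_memberSubfamily_add_sum_card_nonMemberSubfamily a 𝒜
    have hcard := card_memberSubfamily_add_card_nonMemberSubfamily a 𝒜
    have hle := card_le_card (h𝒜.memberSubfamily_subset_nonMemberSubfamily (a := a))
    have := mul_logb_add_mul_logb_add_two_mul_le (Nat.cast_nonneg _) (Nat.cast_le.2 hle)
    rw [← Nat.cast_sum, ← hsum, ← hcard]
    push_cast [sum_add_distrib, sum_const, nsmul_eq_mul, mul_one]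
    rw [add_comm (#(𝒜.memberSubfamily a) : ℝ)]
    linarith [ih₀ h𝒜.nonMemberSubfamily, ih₁ h𝒜.memberSubfamily]

theorem mem_of_subset_of_forall_insert_mem {X : Finset α} {T : Finset (Finset α)}
    {F G : Finset α} (hT : ∀ F ∈ T, ∀ x ∈ X, insert x F ∈ T) (hF : F ∈ T) (hFG : F ⊆ G)
    (hGX : G ⊆ X) : G ∈ T := by
  suffices ∀ U ⊆ X, F ∪ U ∈ T by
    simpa only [union_sdiff_of_subset hFG] using this (G \ F) (sdiff_subset.trans hGX)
  intro U
  induction U using Finset.induction_on with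
  | empty => simpa using hF
  | insert a U _ ih =>
    intro hU
    rw [insert_subset_iff] at hU
    rw [union_insert]
    exact hT _ (ih hU.2) a hU.1

variable {S : Finset (Finset α)} {X : Finset α} {φ : Finset α → Finset α} {A B : Finset α} {x : α}

structure IsIntervalPacking (S : Finset (Finset α)) (X : Finset α) (φ : Finset α → Finset α) :
    Prop where
  subset_apply : ∀ A ∈ S, A ⊆ φ A
  apply_subset : ∀ A ∈ S, φ A ⊆ X
  pairwiseDisjoint : (S : Set (Finset α)).PairwiseDisjoint fun A ↦ Icc A (φ A)

/-- The up-compression in direction `x` of the family `S.image φ`, followed along `φ`. -/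
def upCompress (S : Finset (Finset α)) (φ : Finset α → Finset α) (x : α) (A : Finset α) :
    Finset α :=
  if insert x (φ A) ∈ S.image φ then φ A else insert x (φ A)

theorem upCompress_of_insert_mem (h : insert x (φ A) ∈ S.image φ) :
    upCompress S φ x A = φ A := if_pos h

theorem upCompress_of_insert_notMem (h : insert x (φ A) ∉ S.image φ) :
    upCompress S φ x A = insert x (φ A) := if_neg h

theorem subset_upCompress : φ A ⊆ upCompress S φ x A := by
  unfold upCompress; split_ifs <;> simp

theorem upCompress_subset_insert : upCompress S φ x A ⊆ insert x (φ A) := by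
  unfold upCompress; split_ifs <;> simp

theorem notMem_of_insert_notMem_image (hA : A ∈ S) (h : insert x (φ A) ∉ S.image φ) :
    x ∉ φ A :=
  fun hx ↦ h (by rw [insert_eq_of_mem hx]; exact mem_image_of_mem φ hA)

theorem insert_mem_image_upCompress (hA : A ∈ S) :
    insert x (φ A) ∈ S.image (upCompress S φ x) := by
  by_cases h : insert x (φ A) ∈ S.image φ
  · obtain ⟨B, hB, hBA⟩ := mem_image.1 h
    have hB' : insert x (φ B) ∈ S.image φ := by rwa [hBA, insert_idem]
    exact mem_image.2 ⟨B, hB, by rw [upCompress_of_insert_mem hB', hBA]⟩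
  · exact mem_image.2 ⟨A, hA, upCompress_of_insert_notMem h⟩

theorem union_mem_image_upCompress (hunion : ∀ A ∈ S, ∀ B ∈ S, φ A ∪ B ∈ S.image φ)
    (hA : A ∈ S) (hB : B ∈ S) : upCompress S φ x A ∪ B ∈ S.image (upCompress S φ x) := by
  obtain ⟨C, hC, hCAB⟩ := mem_image.1 (hunion A hA B hB)
  by_cases hmA : insert x (φ A) ∈ S.image φ
  · obtain ⟨A₁, hA₁, hA₁A⟩ := mem_image.1 hmA
    have hmC : insert x (φ C) ∈ S.image φ := by
      rw [hCAB, ← insert_union, ← hA₁A]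
      exact hunion A₁ hA₁ B hB
    rw [upCompress_of_insert_mem hmA, ← hCAB, ← upCompress_of_insert_mem hmC]
    exact mem_image_of_mem _ hC
  · rw [upCompress_of_insert_notMem hmA, insert_union, ← hCAB]
    exact insert_mem_image_upCompress hC

theorem isIntervalPacking_id (hSX : ∀ A ∈ S, A ⊆ X) : IsIntervalPacking S X id where
  subset_apply _ _ := subset_rfl
  apply_subset := hSX
  pairwiseDisjoint A _ B _ hAB := by
    simpa only [Function.onFun, id, Icc_self, disjoint_singleton] using hAB

theorem isLowerSet_image_sdiff (hφX : ∀ A ∈ S, φ A ⊆ X)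
    (hup : ∀ F ∈ S.image φ, ∀ x ∈ X, insert x F ∈ S.image φ) :
    IsLowerSet (S.image (X \ φ ·) : Set (Finset α)) := by
  intro E E' hE'E hE
  obtain ⟨A, hA, rfl⟩ := mem_image.1 hE
  obtain ⟨hE'X, hE'A⟩ := subset_sdiff.1 hE'E
  obtain ⟨B, hB, hBE'⟩ := mem_image.1 <| mem_of_subset_of_forall_insert_mem hup
    (mem_image_of_mem φ hA) (subset_sdiff.2 ⟨hφX A hA, hE'A.symm⟩) sdiff_subset
  exact mem_image.2 ⟨B, hB, by rw [hBE', Finset.sdiff_sdiff_eq_self hE'X]⟩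

namespace IsIntervalPacking

theorem disjoint_upCompress_of_insert_notMem (hφ : IsIntervalPacking S X φ)
    (hunion : ∀ A ∈ S, ∀ B ∈ S, φ A ∪ B ∈ S.image φ) (hA : A ∈ S) (hB : B ∈ S) (hAB : A ≠ B)
    (hmoved : insert x (φ A) ∉ S.image φ) :
    Disjoint (Icc A (upCompress S φ x A)) (Icc B (upCompress S φ x B)) := by
  rw [upCompress_of_insert_notMem hmoved]
  refine disjoint_left.2 fun C hCA hCB ↦ ?_
  rw [mem_Icc] at hCA hCB
  by_cases hxB : x ∈ B
  · refine hmoved ?_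
    have : φ A ∪ B = insert x (φ A) :=
      subset_antisymm (union_subset (subset_insert x _) (hCB.1.trans hCA.2))
        (insert_subset (mem_union_right _ hxB) subset_union_left)
    exact this ▸ hunion A hA B hB
  · have hxA : x ∉ A := fun hx ↦
      notMem_of_insert_notMem_image hA hmoved (hφ.subset_apply A hA hx)
    have hCA' : C.erase x ∈ Icc A (φ A) :=
      mem_Icc.2 ⟨subset_erase.2 ⟨hCA.1, hxA⟩, subset_insert_iff.1 hCA.2⟩
    have hCB' : C.erase x ∈ Icc B (φ B) :=
      mem_Icc.2 ⟨subset_erase.2 ⟨hCB.1, hxB⟩,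
        subset_insert_iff.1 (hCB.2.trans upCompress_subset_insert)⟩
    exact disjoint_left.1 (hφ.pairwiseDisjoint hA hB hAB) hCA' hCB'

theorem upCompress (hφ : IsIntervalPacking S X φ)
    (hunion : ∀ A ∈ S, ∀ B ∈ S, φ A ∪ B ∈ S.image φ) (hx : x ∈ X) :
    IsIntervalPacking S X (upCompress S φ x) where
  subset_apply A hA := (hφ.subset_apply A hA).trans subset_upCompress
  apply_subset A hA := upCompress_subset_insert.trans (insert_subset hx (hφ.apply_subset A hA))
  pairwiseDisjoint A hA B hB hAB := by
    by_cases hmA : insert x (φ A) ∈ S.image φ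
    · by_cases hmB : insert x (φ B) ∈ S.image φ
      · simpa only [Function.onFun, upCompress_of_insert_mem hmA, upCompress_of_insert_mem hmB]
          using hφ.pairwiseDisjoint hA hB hAB
      · exact (hφ.disjoint_upCompress_of_insert_notMem hunion hB hA hAB.symm hmB).symm
    · exact hφ.disjoint_upCompress_of_insert_notMem hunion hA hB hAB hmA

theorem exists_forall_insert_mem (hφ : IsIntervalPacking S X φ)
    (hunion : ∀ A ∈ S, ∀ B ∈ S, φ A ∪ B ∈ S.image φ) :
    ∃ ψ, IsIntervalPacking S X ψ ∧ ∀ F ∈ S.image ψ, ∀ x ∈ X, insert x F ∈ S.image ψ := by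
  induction h : ∑ A ∈ S, #(X \ φ A) using Nat.strong_induction_on generalizing φ with
  | _ k ih =>
  by_cases hup : ∀ F ∈ S.image φ, ∀ x ∈ X, insert x F ∈ S.image φ
  · exact ⟨φ, hφ, hup⟩
  simp only [forall_mem_image, not_forall] at hup
  obtain ⟨A, hA, x, hx, hmoved⟩ := hup
  refine ih _ ?_ (hφ.upCompress hunion hx)
    (fun A hA B hB ↦ union_mem_image_upCompress hunion hA hB) rfl
  rw [← h]
  refine sum_lt_sum (fun B _ ↦ card_le_card (sdiff_subset_sdiff subset_rfl subset_upCompress))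
    ⟨A, hA, card_lt_card ?_⟩
  rw [upCompress_of_insert_notMem hmoved, sdiff_insert]
  exact erase_ssubset (mem_sdiff.2 ⟨hx, notMem_of_insert_notMem_image hA hmoved⟩)

theorem injOn (hφ : IsIntervalPacking S X φ) : Set.InjOn φ S := by
  intro A hA B hB hAB
  by_contra hne
  exact disjoint_left.1 (hφ.pairwiseDisjoint hA hB hne)
    (mem_Icc.2 ⟨hφ.subset_apply A hA, le_rfl⟩)
    (mem_Icc.2 ⟨hAB ▸ hφ.subset_apply B hB, hAB.le⟩)

theorem sum_two_pow_le (hφ : IsIntervalPacking S X φ) :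
    ∑ A ∈ S, 2 ^ (#(φ A) - #A) ≤ 2 ^ #X :=
  calc ∑ A ∈ S, 2 ^ (#(φ A) - #A) = #(S.biUnion fun A ↦ Icc A (φ A)) := by
        rw [card_biUnion hφ.pairwiseDisjoint]
        exact sum_congr rfl fun A hA ↦ (card_Icc_finset (hφ.subset_apply A hA)).symm
    _ ≤ #X.powerset := card_le_card <| biUnion_subset.2 fun A hA C hC ↦
        mem_powerset.2 ((mem_Icc.1 hC).2.trans (hφ.apply_subset A hA))
    _ = 2 ^ #X := card_powerset X

theorem sum_two_rpow_le (hφ : IsIntervalPacking S X φ) (hS : S.Nonempty) :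
    ∑ A ∈ S, (2 : ℝ) ^ ((#(φ A) : ℝ) - #A) ≤ #S * 2 ^ ((#X : ℝ) - logb 2 #S) := by
  have hS' : (0 : ℝ) < #S := by exact_mod_cast hS.card_pos
  rw [rpow_sub two_pos, rpow_logb two_pos one_lt_two.ne' hS', mul_div_cancel₀ _ hS'.ne',
    rpow_natCast]
  calc ∑ A ∈ S, (2 : ℝ) ^ ((#(φ A) : ℝ) - #A) = ((∑ A ∈ S, 2 ^ (#(φ A) - #A) : ℕ) : ℝ) := by
        push_cast
        refine sum_congr rfl fun A hA ↦ ?_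
        rw [← Nat.cast_sub (card_le_card (hφ.subset_apply A hA)), rpow_natCast]
    _ ≤ 2 ^ #X := by exact_mod_cast hφ.sum_two_pow_le

theorem card_mul_sub_sum_card_le (hφ : IsIntervalPacking S X φ)
    (hup : ∀ F ∈ S.image φ, ∀ x ∈ X, insert x F ∈ S.image φ) :
    #S * #X - ∑ A ∈ S, (#(φ A) : ℝ) ≤ #S * logb 2 #S / 2 := by
  have hinj : Set.InjOn (X \ φ ·) S := fun A hA B hB hAB ↦ hφ.injOn hA hB <| by
    rw [← Finset.sdiff_sdiff_eq_self (hφ.apply_subset A hA),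
      ← Finset.sdiff_sdiff_eq_self (hφ.apply_subset B hB)]
    exact congrArg (X \ ·) hAB
  have hcompl : ∀ A ∈ S, (#(X \ φ A) : ℝ) = #X - #(φ A) := fun A hA ↦ by
    rw [card_sdiff_of_subset (hφ.apply_subset A hA),
      Nat.cast_sub (card_le_card (hφ.apply_subset A hA))]
  have := (isLowerSet_image_sdiff hφ.apply_subset hup).sum_card_le
  rwa [card_image_of_injOn hinj, sum_image hinj, sum_congr rfl hcompl, sum_sub_distrib, sum_const,
    nsmul_eq_mul] at this

theorem card_mul_logb_le_sum_card (hφ : IsIntervalPacking S X φ)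
    (hup : ∀ F ∈ S.image φ, ∀ x ∈ X, insert x F ∈ S.image φ) (hS : S.Nonempty) :
    #S * logb 2 #S / 2 ≤ ∑ A ∈ S, (#A : ℝ) := by
  have := sum_le_card_mul_of_sum_two_rpow_le (hφ.sum_two_rpow_le hS)
  rw [sum_sub_distrib] at this
  linarith [hφ.card_mul_sub_sum_card_le hup]

theorem card_eq_two_pow_of_sum_card_eq (hφ : IsIntervalPacking S X φ)
    (hup : ∀ F ∈ S.image φ, ∀ x ∈ X, insert x F ∈ S.image φ) (hXS : X ∈ S)
    (heq : ∑ A ∈ S, (#A : ℝ) = #S * logb 2 #S / 2) : #S = 2 ^ #X := by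
  have hX := eq_of_sum_two_rpow_le_of_card_mul_le_sum (hφ.sum_two_rpow_le ⟨X, hXS⟩)
    (by rw [sum_sub_distrib]; linarith [hφ.card_mul_sub_sum_card_le hup]) X hXS
  rw [subset_antisymm (hφ.apply_subset X hXS) (hφ.subset_apply X hXS), sub_self] at hX
  have hS : (0 : ℝ) < #S := by exact_mod_cast card_pos.2 ⟨X, hXS⟩
  have : (#S : ℝ) = 2 ^ (#X : ℝ) := by
    rw [← rpow_logb two_pos one_lt_two.ne' hS]
    congr 1
    linarith
  exact_mod_cast this.trans (rpow_natCast 2 #X)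

end IsIntervalPacking

end SetFamily

/-- **Reimer's Average Set Size Theorem.**
If `S` is a union-closed family of finite sets with `|S| = m ≥ 1`, then
`∑_{A ∈ S} |A| ≥ (m · log₂ m)/2`, with equality iff `S` is the powerset of
some finite set. -/
theorem reimer_average_set_size {α : Type*} [DecidableEq α]
    (S : Finset (Finset α)) (m : ℕ) (hm : S.card = m) (hm1 : 1 ≤ m)
    (huc : ∀ A ∈ S, ∀ B ∈ S, A ∪ B ∈ S) :
    (m : ℝ) * Real.logb 2 m / 2 ≤ ∑ A ∈ S, (A.card : ℝ) ∧
      ((∑ A ∈ S, (A.card : ℝ)) = (m : ℝ) * Real.logb 2 m / 2 ↔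
        ∃ Ω : Finset α, S = Ω.powerset) := by
  subst hm
  have hS : S.Nonempty := card_pos.1 hm1
  set X := S.sup id
  have hXS : X ∈ S := SupClosed.finsetSup_mem (fun A hA B hB ↦ huc A hA B hB) hS fun A hA ↦ hA
  have hSX : ∀ A ∈ S, A ⊆ X := fun A hA ↦ le_sup (f := id) hA
  obtain ⟨ψ, hψ, hup⟩ := (isIntervalPacking_id hSX).exists_forall_insert_mem
    fun A hA B hB ↦ by simpa using huc A hA B hB
  have hbound := hψ.card_mul_logb_le_sum_card hup hS
  refine ⟨hbound, fun heq ↦ ⟨X, ?_⟩, ?_⟩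
  · refine eq_of_subset_of_card_le (fun A hA ↦ mem_powerset.2 (hSX A hA)) ?_
    rw [card_powerset, hψ.card_eq_two_pow_of_sum_card_eq hup hXS heq]
  · rintro ⟨Ω, rfl⟩
    refine le_antisymm (IsLowerSet.sum_card_le ?_) hbound
    rw [← Iic_eq_powerset, coe_Iic]
    exact isLowerSet_Iic Ω
end

section
/- Let S be a separating union-closed family of subsets of [n] = {1,...,n} whose elements are labeled in order of increasing degree, i.e., d_S(i) ≤ d_S(j) whenever i ≤ j. Then for every i ∈ [n−1], S contains a set A_i of the form A_i = ({i+1, i+2, ..., n}) ∪ X_i where X_i ⊆ [i−1] (in particular i ∉ A_i and {i+1,...,n} ⊆ A_i), and these n−1 sets A_1, ..., A_{n−1} are pairwise distinct. -/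
/-!
If `i < j`, the sets containing `j` cannot all contain `i`: they would form a subfamily of the
sets containing `i`, of at least the same size, hence equal to it, and then no set could
separate `i` from `j`. So for every `j > i` some member of `S` contains `j` but not `i`, and
the union of these members is the required `A i`. For `i < j`, `j ∈ A i` while `j ∉ A j`,
so the sets are distinct.
-/

open Finset

section

variable {α : Type*} [DecidableEq α]

theorem exists_mem_not_mem_of_separates_of_card_filter_le {S : Finset (Finset α)} {i j : α}
    (hsep : ∃ A ∈ S, (i ∈ A ∧ j ∉ A) ∨ (j ∈ A ∧ i ∉ A))
    (hdeg : #(S.filter (i ∈ ·)) ≤ #(S.filter (j ∈ ·))) :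
    ∃ A ∈ S, j ∈ A ∧ i ∉ A := by
  by_contra! hji
  have hsubset : S.filter (j ∈ ·) ⊆ S.filter (i ∈ ·) := fun A hA => by
    simp only [mem_filter] at hA ⊢
    exact ⟨hA.1, hji A hA.1 hA.2⟩
  have heq := eq_of_subset_of_card_le hsubset hdeg
  obtain ⟨A, hAS, ⟨hiA, hjA⟩ | ⟨hjA, hiA⟩⟩ := hsep
  · have hA : A ∈ S.filter (j ∈ ·) := heq ▸ mem_filter.mpr ⟨hAS, hiA⟩
    exact hjA (mem_filter.mp hA).2
  · exact hiA (hji A hAS hjA)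

theorem exists_superset_not_mem_of_supClosed {S : Set (Finset α)} (hS : SupClosed S)
    {T : Finset α} (hT : T.Nonempty) {i : α} (h : ∀ a ∈ T, ∃ A ∈ S, a ∈ A ∧ i ∉ A) :
    ∃ B ∈ S, T ⊆ B ∧ i ∉ B := by
  choose! A hAS haA hiA using h
  refine ⟨T.sup' hT A, hS.finsetSup'_mem hT hAS, fun a ha => le_sup' A ha (haA a ha), ?_⟩
  rw [mem_sup']
  rintro ⟨a, ha, hia⟩
  exact hiA a ha hia

end

theorem subset_Icc_union_Icc_of_not_mem {A : Finset ℕ} {n i : ℕ} (hA : A ⊆ Icc 1 n)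
    (hi : i ∉ A) : A ⊆ Icc 1 (i - 1) ∪ Icc (i + 1) n := by
  intro x hx
  have hx' := mem_Icc.mp (hA hx)
  have hxi : x ≠ i := fun h => hi (h ▸ hx)
  simp only [mem_union, mem_Icc]
  omega

/-- If `S` is a separating union-closed family of subsets of `[n] = {1,…,n}`
whose elements are labeled in order of increasing degree, then for each
`i ∈ [n-1]` there is a set `A i ∈ S` with `{i+1,…,n} ⊆ A i` and
`A i ⊆ [i-1] ∪ {i+1,…,n}` (so `A i = {i+1,…,n} ∪ X_i` with `X_i ⊆ [i-1]`,
in particular `i ∉ A i`), and these `n-1` sets are pairwise distinct. -/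
theorem separating_unionClosed_structure (n : ℕ) (S : Finset (Finset ℕ))
    (hsub : ∀ A ∈ S, A ⊆ Finset.Icc 1 n)
    (huc : ∀ A ∈ S, ∀ B ∈ S, A ∪ B ∈ S)
    (hsep : ∀ i ∈ Finset.Icc 1 n, ∀ j ∈ Finset.Icc 1 n, i ≠ j →
      ∃ A ∈ S, (i ∈ A ∧ j ∉ A) ∨ (j ∈ A ∧ i ∉ A))
    (hmono : ∀ i ∈ Finset.Icc 1 n, ∀ j ∈ Finset.Icc 1 n, i ≤ j →
      (S.filter (fun A => i ∈ A)).card ≤ (S.filter (fun A => j ∈ A)).card) :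
    ∃ A : ℕ → Finset ℕ,
      (∀ i ∈ Finset.Icc 1 (n - 1),
        A i ∈ S ∧ Finset.Icc (i + 1) n ⊆ A i ∧
          A i ⊆ Finset.Icc 1 (i - 1) ∪ Finset.Icc (i + 1) n) ∧
      (∀ i ∈ Finset.Icc 1 (n - 1), ∀ j ∈ Finset.Icc 1 (n - 1),
        i ≠ j → A i ≠ A j) := by
  have hS : SupClosed (S : Set (Finset ℕ)) := fun A hA B hB => huc A hA B hB
  have hexists : ∀ i ∈ Icc 1 (n - 1), ∃ B ∈ S, Icc (i + 1) n ⊆ B ∧ i ∉ B := by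
    intro i hi
    have hi' := mem_Icc.mp hi
    refine exists_superset_not_mem_of_supClosed hS (nonempty_Icc.mpr (by omega)) fun j hj => ?_
    have hj' := mem_Icc.mp hj
    have hiI : i ∈ Icc 1 n := mem_Icc.mpr ⟨hi'.1, by omega⟩
    have hjI : j ∈ Icc 1 n := mem_Icc.mpr ⟨by omega, hj'.2⟩
    exact exists_mem_not_mem_of_separates_of_card_filter_le (hsep i hiI j hjI (by omega))
      (hmono i hiI j hjI (by omega))
  choose! A hAS hAsup hiA using hexists
  refine ⟨A, fun i hi => ⟨hAS i hi, hAsup i hi,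
    subset_Icc_union_Icc_of_not_mem (hsub _ (hAS i hi)) (hiA i hi)⟩, ?_⟩
  have hlt : ∀ i ∈ Icc 1 (n - 1), ∀ j ∈ Icc 1 (n - 1), i < j → A i ≠ A j := by
    intro i hi j hj hij heq
    have hjAi : j ∈ A i := hAsup i hi (mem_Icc.mpr ⟨hij, by grind⟩)
    exact hiA j hj (heq ▸ hjAi)
  intro i hi j hj hij
  rcases hij.lt_or_gt with h | h
  · exact hlt i hi j hj h
  · exact (hlt j hj i hi h).symm
end

section
/- Let S be a separating union-closed family of subsets of [n] = {1,...,n} whose elements are labeled in order of increasing degree, i.e., d_S(i) ≤ d_S(j) whenever i ≤ j. Then d_S(i) ≥ i − 1 for every i ∈ [n]. -/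
/-! Fix `i`. For every `j < i` some member of `S` contains `i` but not `j`: otherwise every member
containing `i` would contain `j`, and a member separating them would give `d(j) > d(i)`.
Since `S` is union-closed, the union `X_j` of all members containing `i` and avoiding `j` is again
such a member, and it absorbs every member of `S` avoiding `j`. Hence `j ↦ X_j` is injective: if
`C ∈ S` contains `j` but not `k`, then `j ∈ C ⊆ X_k` while `j ∉ X_j`. The `i - 1` distinct sets
`X_j` all contain `i`. -/

namespace Finset

variable {α : Type*} [DecidableEq α] {S : Finset (Finset α)} {i j : α}

def maxAvoiding (S : Finset (Finset α)) (i j : α) : Finset α :=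
  (S.filter fun A => i ∈ A ∧ j ∉ A).sup id

theorem notMem_maxAvoiding : j ∉ maxAvoiding S i j := by
  simp [maxAvoiding, mem_sup]

theorem subset_maxAvoiding {A : Finset α} (hA : A ∈ S) (hiA : i ∈ A) (hjA : j ∉ A) :
    A ⊆ maxAvoiding S i j :=
  le_sup (f := id) (mem_filter.2 ⟨hA, hiA, hjA⟩)

theorem mem_maxAvoiding (h : ∃ A ∈ S, i ∈ A ∧ j ∉ A) : i ∈ maxAvoiding S i j := by
  obtain ⟨A, hA, hiA, hjA⟩ := h
  exact subset_maxAvoiding hA hiA hjA hiA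

theorem maxAvoiding_mem (hS : SupClosed (S : Set (Finset α))) (h : ∃ A ∈ S, i ∈ A ∧ j ∉ A) :
    maxAvoiding S i j ∈ S := by
  obtain ⟨A, hA, hiA, hjA⟩ := h
  exact hS.finsetSup_mem ⟨A, mem_filter.2 ⟨hA, hiA, hjA⟩⟩ fun B hB => (mem_filter.1 hB).1

theorem subset_maxAvoiding_of_notMem (hS : SupClosed (S : Set (Finset α)))
    (h : ∃ A ∈ S, i ∈ A ∧ j ∉ A) {C : Finset α} (hC : C ∈ S) (hjC : j ∉ C) :
    C ⊆ maxAvoiding S i j := by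
  have hunion : C ∪ maxAvoiding S i j ⊆ maxAvoiding S i j :=
    subset_maxAvoiding (hS hC (maxAvoiding_mem hS h)) (mem_union_right _ (mem_maxAvoiding h))
      (by simp [hjC, notMem_maxAvoiding])
  exact subset_union_left.trans hunion

theorem maxAvoiding_injOn {T : Finset α} (hS : SupClosed (S : Set (Finset α)))
    (hsep : ∀ j ∈ T, ∀ k ∈ T, j ≠ k → ∃ A ∈ S, (j ∈ A ∧ k ∉ A) ∨ (k ∈ A ∧ j ∉ A))
    (hwit : ∀ j ∈ T, ∃ A ∈ S, i ∈ A ∧ j ∉ A) :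
    Set.InjOn (maxAvoiding S i) T := by
  intro j hj k hk hjk
  by_contra hne
  obtain ⟨C, hC, ⟨hjC, hkC⟩ | ⟨hkC, hjC⟩⟩ := hsep j hj k hk hne
  · have hjX : j ∈ maxAvoiding S i k := subset_maxAvoiding_of_notMem hS (hwit k hk) hC hkC hjC
    exact notMem_maxAvoiding (hjk ▸ hjX)
  · have hkX : k ∈ maxAvoiding S i j := subset_maxAvoiding_of_notMem hS (hwit j hj) hC hjC hkC
    exact notMem_maxAvoiding (hjk ▸ hkX)

theorem card_le_card_filter_mem {T : Finset α} (hS : SupClosed (S : Set (Finset α)))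
    (hsep : ∀ j ∈ T, ∀ k ∈ T, j ≠ k → ∃ A ∈ S, (j ∈ A ∧ k ∉ A) ∨ (k ∈ A ∧ j ∉ A))
    (hwit : ∀ j ∈ T, ∃ A ∈ S, i ∈ A ∧ j ∉ A) :
    T.card ≤ (S.filter (i ∈ ·)).card :=
  card_le_card_of_injOn (maxAvoiding S i)
    (fun j hj => mem_filter.2 ⟨maxAvoiding_mem hS (hwit j hj), mem_maxAvoiding (hwit j hj)⟩)
    (maxAvoiding_injOn hS hsep hwit)

theorem exists_mem_notMem_of_card_filter_le
    (hsep : ∃ A ∈ S, (i ∈ A ∧ j ∉ A) ∨ (j ∈ A ∧ i ∉ A))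
    (hdeg : (S.filter (j ∈ ·)).card ≤ (S.filter (i ∈ ·)).card) :
    ∃ A ∈ S, i ∈ A ∧ j ∉ A := by
  by_contra! hij
  obtain ⟨C, hC, ⟨hiC, hjC⟩ | ⟨hjC, hiC⟩⟩ := hsep
  · exact hjC (hij C hC hiC)
  · have hssub : S.filter (i ∈ ·) ⊂ S.filter (j ∈ ·) :=
      (ssubset_iff_of_subset fun A hA => mem_filter.2
          ⟨(mem_filter.1 hA).1, hij A (mem_filter.1 hA).1 (mem_filter.1 hA).2⟩).2
        ⟨C, mem_filter.2 ⟨hC, hjC⟩, fun hC' => hiC (mem_filter.1 hC').2⟩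
    exact (card_lt_card hssub).not_ge hdeg

end Finset

open Finset in
theorem separating_unionClosed_degree_lower_bound_general (n : ℕ) (S : Finset (Finset ℕ))
    (huc : ∀ A ∈ S, ∀ B ∈ S, A ∪ B ∈ S)
    (hsep : ∀ i ∈ Finset.Icc 1 n, ∀ j ∈ Finset.Icc 1 n, i ≠ j →
      ∃ A ∈ S, (i ∈ A ∧ j ∉ A) ∨ (j ∈ A ∧ i ∉ A))
    (hmono : ∀ i ∈ Finset.Icc 1 n, ∀ j ∈ Finset.Icc 1 n, i ≤ j →
      (S.filter (fun A => i ∈ A)).card ≤ (S.filter (fun A => j ∈ A)).card) :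
    ∀ i ∈ Finset.Icc 1 n, i - 1 ≤ (S.filter (fun A => i ∈ A)).card := by
  intro i hi
  have hS : SupClosed (S : Set (Finset ℕ)) := fun A hA B hB => huc A hA B hB
  have hbelow : ∀ j ∈ Icc 1 (i - 1), j ∈ Icc 1 n ∧ j ≤ i ∧ i ≠ j := by
    intro j hj
    simp only [mem_Icc] at hi hj ⊢
    omega
  calc i - 1 = (Icc 1 (i - 1)).card := by simp
    _ ≤ (S.filter (fun A => i ∈ A)).card :=
      card_le_card_filter_mem hS
        (fun j hj k hk hjk => hsep j (hbelow j hj).1 k (hbelow k hk).1 hjk)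
        (fun j hj => exists_mem_notMem_of_card_filter_le (hsep i hi j (hbelow j hj).1
          (hbelow j hj).2.2) (hmono j (hbelow j hj).1 i hi (hbelow j hj).2.1))

/-- If `S` is a separating union-closed family of subsets of `[n] = {1,…,n}`
whose elements are labeled in order of increasing degree, then
`d_S(i) ≥ i - 1` for every `i ∈ [n]`. -/
theorem separating_unionClosed_degree_lower_bound (n : ℕ) (S : Finset (Finset ℕ))
    (hsub : ∀ A ∈ S, A ⊆ Finset.Icc 1 n)
    (huc : ∀ A ∈ S, ∀ B ∈ S, A ∪ B ∈ S)
    (hsep : ∀ i ∈ Finset.Icc 1 n, ∀ j ∈ Finset.Icc 1 n, i ≠ j →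
      ∃ A ∈ S, (i ∈ A ∧ j ∉ A) ∨ (j ∈ A ∧ i ∉ A))
    (hmono : ∀ i ∈ Finset.Icc 1 n, ∀ j ∈ Finset.Icc 1 n, i ≤ j →
      (S.filter (fun A => i ∈ A)).card ≤ (S.filter (fun A => j ∈ A)).card) :
    ∀ i ∈ Finset.Icc 1 n, i - 1 ≤ (S.filter (fun A => i ∈ A)).card :=
  separating_unionClosed_degree_lower_bound_general n S huc hsep hmono
end

section
/- Let S be a separating union-closed family of subsets of an n-element set Ω. Then the weight of S satisfies w(S) = ∑_{A ∈ S} |A| ≥ n(n−1)/2. -/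
/-!
For `i ∈ Ω` let `M i` be the union of the members of `S` avoiding `i`; by union-closedness it
is itself in `S` whenever it is nonempty, and `i ∉ M i`. If `A ∈ S` contains `i` but not `j`,
then `A ⊆ M j`, so `i ∈ M j`. Separation therefore gives `j ∈ M i` or `i ∈ M j` for every pair
`i ≠ j`, and each such pair is counted in `∑ i, |M i|`, which is thus at least `n(n-1)/2`. The
same fact makes the sets `M i` pairwise distinct (`j ∈ M i` but `j ∉ M j`), so they are distinct
members of `S` and `∑ i, |M i| ≤ w(S)`.
-/

open Finset

namespace Finset

variable {α β : Type*} [DecidableEq α]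

lemma card_mul_pred_le_two_mul_sum_card (Ω : Finset α) (M : α → Finset α)
    (hpair : ∀ i ∈ Ω, ∀ j ∈ Ω, i ≠ j → j ∈ M i ∨ i ∈ M j) :
    #Ω * (#Ω - 1) ≤ 2 * ∑ i ∈ Ω, #(M i) := by
  set P := (Ω ×ˢ Ω).filter fun p => p.2 ∈ M p.1
  have hoffDiag : Ω.offDiag ⊆ P ∪ P.image Prod.swap := by
    intro ⟨i, j⟩ hij
    obtain ⟨hi, hj, hne⟩ := mem_offDiag.1 hij
    rcases hpair i hi j hj hne with h | h
    · exact mem_union_left _ (by simp [P, hi, hj, h])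
    · exact mem_union_right _ (mem_image.2 ⟨(j, i), by simp [P, hi, hj, h], rfl⟩)
  have hP : #P ≤ ∑ i ∈ Ω, #(M i) := by
    rw [card_filter, sum_product]
    refine sum_le_sum fun i _ => ?_
    rw [← card_filter]
    exact card_le_card fun j hj => (mem_filter.1 hj).2
  calc #Ω * (#Ω - 1) = #Ω.offDiag := by rw [offDiag_card, Nat.mul_sub_one]
    _ ≤ #P + #(P.image Prod.swap) := (card_le_card hoffDiag).trans (card_union_le _ _)
    _ ≤ 2 * ∑ i ∈ Ω, #(M i) := by linarith [card_image_le (s := P) (f := Prod.swap)]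

lemma sum_card_le_sum_card_of_injOn {Ω : Finset β} {S : Finset (Finset α)} {M : β → Finset α}
    (hinj : Set.InjOn M Ω) (hmem : ∀ i ∈ Ω, (M i).Nonempty → M i ∈ S) :
    ∑ i ∈ Ω, #(M i) ≤ ∑ A ∈ S, #A := by
  have hsub : (Ω.image M).erase ∅ ⊆ S := by
    intro A hA
    obtain ⟨hA, hAM⟩ := mem_erase.1 hA
    obtain ⟨i, hi, rfl⟩ := mem_image.1 hAM
    exact hmem i hi (nonempty_iff_ne_empty.2 hA)
  calc ∑ i ∈ Ω, #(M i) = ∑ A ∈ Ω.image M, #A := (sum_image hinj).symm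
    _ = ∑ A ∈ (Ω.image M).erase ∅, #A := (sum_erase _ card_empty).symm
    _ ≤ ∑ A ∈ S, #A := sum_le_sum_of_subset hsub

end Finset

namespace SeparatingUnionClosed

variable {α : Type*} [DecidableEq α] (S : Finset (Finset α))

def unionAvoiding (i : α) : Finset α :=
  (S.filter (i ∉ ·)).sup id

variable {S}

lemma mem_unionAvoiding {i j : α} : j ∈ unionAvoiding S i ↔ ∃ A ∈ S, i ∉ A ∧ j ∈ A := by
  simp [unionAvoiding, and_assoc]

lemma not_mem_unionAvoiding_self (i : α) : i ∉ unionAvoiding S i := by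
  simp +contextual [mem_unionAvoiding]

lemma mem_unionAvoiding_of_separates {A : Finset α} (hA : A ∈ S) {i j : α} (hi : i ∈ A)
    (hj : j ∉ A) : i ∈ unionAvoiding S j :=
  mem_unionAvoiding.2 ⟨A, hA, hj, hi⟩

lemma unionAvoiding_mem (huc : ∀ A ∈ S, ∀ B ∈ S, A ∪ B ∈ S) {i : α}
    (hne : (unionAvoiding S i).Nonempty) : unionAvoiding S i ∈ S := by
  have hfilter : (S.filter (i ∉ ·)).Nonempty := by
    obtain ⟨j, hj⟩ := hne
    obtain ⟨A, hA, hiA, -⟩ := mem_unionAvoiding.1 hj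
    exact ⟨A, mem_filter.2 ⟨hA, hiA⟩⟩
  rw [unionAvoiding, ← sup'_eq_sup hfilter]
  exact sup'_mem (S : Set (Finset α)) huc _ hfilter _ fun A hA => (mem_filter.1 hA).1

lemma unionAvoiding_ne_of_mem {i j : α} (h : j ∈ unionAvoiding S i) :
    unionAvoiding S i ≠ unionAvoiding S j :=
  fun heq => not_mem_unionAvoiding_self j (heq ▸ h)

end SeparatingUnionClosed

open SeparatingUnionClosed in
theorem separating_unionClosed_weight_lower_bound_general {α : Type*} [DecidableEq α]
    (Ω : Finset α) (n : ℕ) (hn : Ω.card = n) (S : Finset (Finset α))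
    (huc : ∀ A ∈ S, ∀ B ∈ S, A ∪ B ∈ S)
    (hsep : ∀ i ∈ Ω, ∀ j ∈ Ω, i ≠ j →
      ∃ A ∈ S, (i ∈ A ∧ j ∉ A) ∨ (j ∈ A ∧ i ∉ A)) :
    n * (n - 1) / 2 ≤ ∑ A ∈ S, A.card := by
  have hpair : ∀ i ∈ Ω, ∀ j ∈ Ω, i ≠ j →
      j ∈ unionAvoiding S i ∨ i ∈ unionAvoiding S j := by
    intro i hi j hj hne
    obtain ⟨A, hA, ⟨hiA, hjA⟩ | ⟨hjA, hiA⟩⟩ := hsep i hi j hj hne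
    · exact .inr (mem_unionAvoiding_of_separates hA hiA hjA)
    · exact .inl (mem_unionAvoiding_of_separates hA hjA hiA)
  have hinj : Set.InjOn (unionAvoiding S) Ω := by
    intro i hi j hj heq
    by_contra hne
    rcases hpair i hi j hj hne with h | h
    · exact unionAvoiding_ne_of_mem h heq
    · exact unionAvoiding_ne_of_mem h heq.symm
  have hcount := card_mul_pred_le_two_mul_sum_card Ω _ hpair
  have hweight := sum_card_le_sum_card_of_injOn hinj fun _ _ => unionAvoiding_mem huc
  subst hn
  omega

/-- If `S` is a separating union-closed family of subsets of an `n`-element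
set `Ω`, then `w(S) = ∑_{A ∈ S} |A| ≥ n(n-1)/2`. -/
theorem separating_unionClosed_weight_lower_bound {α : Type*} [DecidableEq α]
    (Ω : Finset α) (n : ℕ) (hn : Ω.card = n) (S : Finset (Finset α))
    (hsub : ∀ A ∈ S, A ⊆ Ω)
    (huc : ∀ A ∈ S, ∀ B ∈ S, A ∪ B ∈ S)
    (hsep : ∀ i ∈ Ω, ∀ j ∈ Ω, i ≠ j →
      ∃ A ∈ S, (i ∈ A ∧ j ∉ A) ∨ (j ∈ A ∧ i ∉ A)) :
    n * (n - 1) / 2 ≤ ∑ A ∈ S, A.card :=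
  separating_unionClosed_weight_lower_bound_general Ω n hn S huc hsep
end

section
/- Let S be a separating union-closed family of subsets of [n] = {1,...,n} (n ≥ 2) whose elements are labeled in order of increasing degree, i.e., d_S(i) ≤ d_S(j) whenever i ≤ j. Then w(S) = n(n−1)/2 if and only if S = T_n or S = T_n ∪ {∅}, where T_n = { {k, k+1, ..., n} : 2 ≤ k ≤ n } is the staircase of height n. -/
/-!
Let `B i` be the largest member of `S` avoiding `i`. Separation plus the degree ordering give, for
`i < j`, a member containing `j` but not `i`; hence `j ∈ B i`, `B i ∈ S`, and `i ↦ B i` is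
injective. So `B 1, …, B (j - 1)` are distinct members containing `j`, i.e. `d(j) ≥ j - 1`, and
`w(S) = ∑ d(j) ≥ ∑ (j - 1) = n(n-1)/2`. Equality forces `d(j) = j - 1`, so the members
containing `j` are exactly `B 1, …, B (j - 1)`. This pins down `B i = {i+1, …, n}`, and every
nonempty member is one of these sets: `S` is `T_n`, possibly with `∅`.
-/

open Finset

theorem Finset.eq_or_eq_insert_of_subset_of_subset_insert {α : Type*} [DecidableEq α]
    {s t : Finset α} {a : α} (hts : t ⊆ s) (hst : s ⊆ insert a t) : s = t ∨ s = insert a t := by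
  by_cases ha : a ∈ s
  · exact Or.inr (hst.antisymm (insert_subset ha hts))
  · exact Or.inl (((subset_insert_iff_of_notMem ha).mp hst).antisymm hts)

theorem Finset.sum_Icc_one_sub_one (n : ℕ) : ∑ j ∈ Icc 1 n, (j - 1) = n * (n - 1) / 2 := by
  rw [← sum_range_id n]
  refine sum_nbij' (· - 1) (· + 1) ?_ ?_ ?_ ?_ fun _ _ => rfl <;>
    intro j hj <;> simp only [mem_Icc, mem_range] at hj ⊢ <;> omega

namespace UnionClosedFamily

section General

variable {α : Type*} [DecidableEq α] {S : Finset (Finset α)} {U A : Finset α} {i j : α}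

def degree (S : Finset (Finset α)) (x : α) : ℕ := #{A ∈ S | x ∈ A}

def weight (S : Finset (Finset α)) : ℕ := ∑ A ∈ S, #A

theorem weight_eq_sum_degree (hS : ∀ A ∈ S, A ⊆ U) : weight S = ∑ x ∈ U, degree S x :=
  calc weight S = ∑ A ∈ S, #(U ∩ A) :=
        sum_congr rfl fun A hA => by rw [inter_eq_right.mpr (hS A hA)]
    _ = ∑ x ∈ U, degree S x := by
        simp_rw [degree, ← filter_mem_eq_inter, card_eq_sum_ones, sum_filter]
        exact sum_comm

theorem exists_mem_notMem_of_degree_le (hsep : ∃ A ∈ S, (i ∈ A ∧ j ∉ A) ∨ (j ∈ A ∧ i ∉ A))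
    (hle : degree S i ≤ degree S j) : ∃ A ∈ S, j ∈ A ∧ i ∉ A := by
  by_contra! h
  have hfilter : {A ∈ S | j ∈ A} = {A ∈ S | i ∈ A} :=
    eq_of_subset_of_card_le (monotone_filter_right S h) hle
  obtain ⟨A, hA, ⟨hiA, hjA⟩ | ⟨hjA, hiA⟩⟩ := hsep
  · have : A ∈ {A ∈ S | j ∈ A} := hfilter ▸ mem_filter.mpr ⟨hA, hiA⟩
    exact hjA (mem_filter.mp this).2
  · exact hiA (h A hA hjA)

/-- The largest member of `S` avoiding `i` when `S` is union-closed (and `∅` if no member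
avoids `i`). -/
def maxAvoiding (S : Finset (Finset α)) (i : α) : Finset α := {A ∈ S | i ∉ A}.sup id

theorem mem_maxAvoiding : j ∈ maxAvoiding S i ↔ ∃ A ∈ S, i ∉ A ∧ j ∈ A := by
  simp [maxAvoiding, mem_sup, and_assoc]

theorem notMem_maxAvoiding : i ∉ maxAvoiding S i := fun h => by
  obtain ⟨A, -, hiA, hi⟩ := mem_maxAvoiding.mp h
  exact hiA hi

theorem maxAvoiding_mem (hS : SupClosed (S : Set (Finset α))) (h : ∃ A ∈ S, i ∉ A) :
    maxAvoiding S i ∈ S :=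
  hS.finsetSup_mem (by simpa [Finset.Nonempty] using h) fun _ hA => (mem_filter.mp hA).1

theorem maxAvoiding_ne (hA : A ∈ S) (hjA : j ∈ A) (hiA : i ∉ A) :
    maxAvoiding S i ≠ maxAvoiding S j := fun h =>
  notMem_maxAvoiding (h ▸ mem_maxAvoiding.mpr ⟨A, hA, hiA, hjA⟩)

end General

def staircase (n : ℕ) : Finset (Finset ℕ) := (Icc 2 n).image (fun k => Icc k n)

theorem weight_staircase (n : ℕ) : weight (staircase n) = ∑ j ∈ Icc 1 n, (j - 1) := by
  have hinj : Set.InjOn (fun k => Icc k n) (Icc 2 n) := fun a ha b _ h =>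
    ((Set.Icc_eq_Icc_iff (mem_Icc.mp ha).2).mp
      (by simpa using congrArg (fun s : Finset ℕ => (s : Set ℕ)) h)).1
  rw [weight, staircase, sum_image hinj]
  simp only [Nat.card_Icc]
  -- `k ↦ n + 2 - k` matches the terms of the two sums; only the zero term `j = 1` is unmatched
  refine sum_bij_ne_zero (fun k _ _ => n + 2 - k) ?_ ?_ ?_ ?_
  · intro k hk _
    rw [mem_Icc] at hk ⊢
    omega
  · intro a ha _ b hb _ h
    rw [mem_Icc] at ha hb
    omega
  · intro j hj hj0
    rw [mem_Icc] at hj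
    exact ⟨n + 2 - j, mem_Icc.mpr ⟨by omega, by omega⟩, by omega, by omega⟩
  · intro k hk _
    rw [mem_Icc] at hk
    omega

def UpwardSeparating (n : ℕ) (S : Finset (Finset ℕ)) : Prop :=
  ∀ i ∈ Icc 1 n, ∀ j ∈ Icc 1 n, i < j → ∃ A ∈ S, j ∈ A ∧ i ∉ A

variable {n i j : ℕ} {S : Finset (Finset ℕ)} {A : Finset ℕ}

theorem maxAvoiding_mem_filter (hS : SupClosed (S : Set (Finset ℕ))) (hup : UpwardSeparating n S)
    (hi : 1 ≤ i) (hij : i < j) (hj : j ≤ n) : maxAvoiding S i ∈ {A ∈ S | j ∈ A} := by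
  obtain ⟨A, hA, hjA, hiA⟩ := hup i (mem_Icc.mpr ⟨hi, by omega⟩) j (mem_Icc.mpr ⟨by omega, hj⟩) hij
  exact mem_filter.mpr ⟨maxAvoiding_mem hS ⟨A, hA, hiA⟩, mem_maxAvoiding.mpr ⟨A, hA, hiA, hjA⟩⟩

theorem injOn_maxAvoiding (hup : UpwardSeparating n S) : Set.InjOn (maxAvoiding S) (Icc 1 n) := by
  intro i hi k hk h
  rw [mem_coe] at hi hk
  by_contra hne
  rcases Nat.lt_or_gt_of_ne hne with hik | hki
  · obtain ⟨A, hA, hkA, hiA⟩ := hup i hi k hk hik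
    exact maxAvoiding_ne hA hkA hiA h
  · obtain ⟨A, hA, hiA, hkA⟩ := hup k hk i hi hki
    exact maxAvoiding_ne hA hiA hkA h.symm

theorem injOn_maxAvoiding_Icc_sub_one (hup : UpwardSeparating n S) (hj : j ≤ n) :
    Set.InjOn (maxAvoiding S) (Icc 1 (j - 1)) :=
  (injOn_maxAvoiding hup).mono (coe_subset.mpr (Icc_subset_Icc_right (by omega)))

theorem image_maxAvoiding_subset_filter (hS : SupClosed (S : Set (Finset ℕ)))
    (hup : UpwardSeparating n S) (hj : j ≤ n) :
    (Icc 1 (j - 1)).image (maxAvoiding S) ⊆ {A ∈ S | j ∈ A} :=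
  image_subset_iff.mpr fun i hi =>
    maxAvoiding_mem_filter hS hup (mem_Icc.mp hi).1 (by grind) hj

theorem sub_one_le_degree (hS : SupClosed (S : Set (Finset ℕ))) (hup : UpwardSeparating n S)
    (hj : j ≤ n) : j - 1 ≤ degree S j := by
  calc j - 1 = #((Icc 1 (j - 1)).image (maxAvoiding S)) := by
        rw [card_image_of_injOn (injOn_maxAvoiding_Icc_sub_one hup hj), Nat.card_Icc]; omega
    _ ≤ degree S j := card_le_card (image_maxAvoiding_subset_filter hS hup hj)

theorem degree_eq_of_weight_eq (hsub : ∀ A ∈ S, A ⊆ Icc 1 n)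
    (hS : SupClosed (S : Set (Finset ℕ))) (hup : UpwardSeparating n S)
    (hw : weight S = ∑ j ∈ Icc 1 n, (j - 1)) : ∀ j ∈ Icc 1 n, degree S j = j - 1 := by
  rw [weight_eq_sum_degree hsub, eq_comm,
    sum_eq_sum_iff_of_le fun j hj => sub_one_le_degree hS hup (mem_Icc.mp hj).2] at hw
  exact fun j hj => (hw j hj).symm

theorem exists_maxAvoiding_eq_of_mem (hsub : ∀ A ∈ S, A ⊆ Icc 1 n)
    (hS : SupClosed (S : Set (Finset ℕ))) (hup : UpwardSeparating n S)
    (hdeg : ∀ j ∈ Icc 1 n, degree S j = j - 1) (hA : A ∈ S) (hjA : j ∈ A) :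
    ∃ i ∈ Icc 1 (j - 1), maxAvoiding S i = A := by
  have hj := hsub A hA hjA
  have hfilter : (Icc 1 (j - 1)).image (maxAvoiding S) = {A ∈ S | j ∈ A} := by
    refine eq_of_subset_of_card_le (image_maxAvoiding_subset_filter hS hup (mem_Icc.mp hj).2) ?_
    rw [← degree, hdeg j hj, card_image_of_injOn
      (injOn_maxAvoiding_Icc_sub_one hup (mem_Icc.mp hj).2), Nat.card_Icc]
    omega
  exact mem_image.mp (hfilter ▸ mem_filter.mpr ⟨hA, hjA⟩)

theorem maxAvoiding_eq_Icc (hsub : ∀ A ∈ S, A ⊆ Icc 1 n)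
    (hS : SupClosed (S : Set (Finset ℕ))) (hup : UpwardSeparating n S)
    (hdeg : ∀ j ∈ Icc 1 n, degree S j = j - 1) (hi : 1 ≤ i) (hin : i < n) :
    maxAvoiding S i = Icc (i + 1) n := by
  have hBi : maxAvoiding S i ∈ S :=
    (mem_filter.mp (maxAvoiding_mem_filter hS hup hi hin le_rfl)).1
  ext j
  constructor
  · intro hj
    obtain ⟨k, hk, hki⟩ := exists_maxAvoiding_eq_of_mem hsub hS hup hdeg hBi hj
    have hjn := mem_Icc.mp (hsub _ hBi hj)
    have hk := mem_Icc.mp hk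
    have hki' : k = i :=
      injOn_maxAvoiding hup (by rw [mem_coe, mem_Icc]; omega) (by rw [mem_coe, mem_Icc]; omega) hki
    exact mem_Icc.mpr ⟨by omega, hjn.2⟩
  · intro hj
    have hj := mem_Icc.mp hj
    exact (mem_filter.mp (maxAvoiding_mem_filter hS hup hi (by omega) hj.2)).2

theorem staircase_subset (hsub : ∀ A ∈ S, A ⊆ Icc 1 n)
    (hS : SupClosed (S : Set (Finset ℕ))) (hup : UpwardSeparating n S)
    (hdeg : ∀ j ∈ Icc 1 n, degree S j = j - 1) : staircase n ⊆ S := by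
  intro A hA
  obtain ⟨k, hk, rfl⟩ := mem_image.mp hA
  have hk := mem_Icc.mp hk
  have hB :=
    (mem_filter.mp (maxAvoiding_mem_filter hS hup (i := k - 1) (by omega) (by omega) hk.2)).1
  rwa [maxAvoiding_eq_Icc hsub hS hup hdeg (by omega) (by omega), Nat.sub_add_cancel (by omega)]
    at hB

theorem subset_insert_empty_staircase (hsub : ∀ A ∈ S, A ⊆ Icc 1 n)
    (hS : SupClosed (S : Set (Finset ℕ))) (hup : UpwardSeparating n S)
    (hdeg : ∀ j ∈ Icc 1 n, degree S j = j - 1) : S ⊆ insert ∅ (staircase n) := by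
  intro A hA
  obtain rfl | ⟨j, hjA⟩ := A.eq_empty_or_nonempty
  · exact mem_insert_self _ _
  obtain ⟨i, hi, rfl⟩ := exists_maxAvoiding_eq_of_mem hsub hS hup hdeg hA hjA
  have hi := mem_Icc.mp hi
  have hj := mem_Icc.mp (hsub _ hA hjA)
  rw [maxAvoiding_eq_Icc hsub hS hup hdeg hi.1 (by omega)]
  exact mem_insert_of_mem (mem_image.mpr ⟨i + 1, mem_Icc.mpr ⟨by omega, by omega⟩, rfl⟩)

end UnionClosedFamily

open UnionClosedFamily in
theorem separating_unionClosed_weight_eq_iff_staircase_general (n : ℕ)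
    (S : Finset (Finset ℕ))
    (hsub : ∀ A ∈ S, A ⊆ Finset.Icc 1 n)
    (huc : ∀ A ∈ S, ∀ B ∈ S, A ∪ B ∈ S)
    (hsep : ∀ i ∈ Finset.Icc 1 n, ∀ j ∈ Finset.Icc 1 n, i ≠ j →
      ∃ A ∈ S, (i ∈ A ∧ j ∉ A) ∨ (j ∈ A ∧ i ∉ A))
    (hmono : ∀ i ∈ Finset.Icc 1 n, ∀ j ∈ Finset.Icc 1 n, i ≤ j →
      (S.filter (fun A => i ∈ A)).card ≤ (S.filter (fun A => j ∈ A)).card) :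
    (∑ A ∈ S, A.card = n * (n - 1) / 2) ↔
      (S = (Finset.Icc 2 n).image (fun k => Finset.Icc k n) ∨
        S = insert ∅ ((Finset.Icc 2 n).image (fun k => Finset.Icc k n))) := by
  have hS : SupClosed (S : Set (Finset ℕ)) := fun A hA B hB => huc A hA B hB
  have hup : UpwardSeparating n S := fun i hi j hj hij =>
    exists_mem_notMem_of_degree_le (hsep i hi j hj hij.ne) (hmono i hi j hj hij.le)
  rw [← sum_Icc_one_sub_one]
  constructor
  · intro hw
    have hdeg := degree_eq_of_weight_eq hsub hS hup hw
    exact eq_or_eq_insert_of_subset_of_subset_insert (staircase_subset hsub hS hup hdeg)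
      (subset_insert_empty_staircase hsub hS hup hdeg)
  · rintro (rfl | rfl)
    · exact weight_staircase n
    · exact (sum_insert_zero card_empty).trans (weight_staircase n)

/-- Equality case: a separating union-closed family `S` on `[n]` (with `n ≥ 2`,
elements labeled in order of increasing degree) has weight exactly `n(n-1)/2`
iff `S` is the staircase `T_n = { {k,…,n} : 2 ≤ k ≤ n }` or `T_n ∪ {∅}`. -/
theorem separating_unionClosed_weight_eq_iff_staircase (n : ℕ) (hn : 2 ≤ n)
    (S : Finset (Finset ℕ))
    (hsub : ∀ A ∈ S, A ⊆ Finset.Icc 1 n)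
    (huc : ∀ A ∈ S, ∀ B ∈ S, A ∪ B ∈ S)
    (hsep : ∀ i ∈ Finset.Icc 1 n, ∀ j ∈ Finset.Icc 1 n, i ≠ j →
      ∃ A ∈ S, (i ∈ A ∧ j ∉ A) ∨ (j ∈ A ∧ i ∉ A))
    (hmono : ∀ i ∈ Finset.Icc 1 n, ∀ j ∈ Finset.Icc 1 n, i ≤ j →
      (S.filter (fun A => i ∈ A)).card ≤ (S.filter (fun A => j ∈ A)).card) :
    (∑ A ∈ S, A.card = n * (n - 1) / 2) ↔
      (S = (Finset.Icc 2 n).image (fun k => Finset.Icc k n) ∨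
        S = insert ∅ ((Finset.Icc 2 n).image (fun k => Finset.Icc k n))) :=
  separating_unionClosed_weight_eq_iff_staircase_general n S hsub huc hsep hmono
end

section
/- Let S be a separating union-closed family of subsets of a finite set Ω. Then |Ω| ≤ |S| + 1; equivalently, a union-closed family of size m can be at most (m+1)-separating. -/
/-!
Send each point `x` to the union of the members of `S` avoiding `x`. Union-closedness makes this
union a member of `S` (or `∅`, if nothing avoids `x`), and it still avoids `x`. If a set `A ∈ S`
contains `x` but not `y`, then the image of `y` contains `A`, hence `x`, while the image of `x`
does not; so separation makes the map injective on `Ω`, with values in `S ∪ {∅}`.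
-/

section

variable {α : Type*} [DecidableEq α]

def unionAvoiding (S : Finset (Finset α)) (x : α) : Finset α :=
  {A ∈ S | x ∉ A}.sup id

lemma notMem_unionAvoiding (S : Finset (Finset α)) (x : α) : x ∉ unionAvoiding S x := by
  intro hx
  obtain ⟨A, hA, hxA⟩ := Finset.mem_sup.mp hx
  exact (Finset.mem_filter.mp hA).2 hxA

lemma subset_unionAvoiding {S : Finset (Finset α)} {A : Finset α} {x : α} (hA : A ∈ S)
    (hx : x ∉ A) : A ⊆ unionAvoiding S x :=
  Finset.le_sup (f := id) (Finset.mem_filter.mpr ⟨hA, hx⟩)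

lemma unionAvoiding_mem_insert_empty {S : Finset (Finset α)} (hS : SupClosed (S : Set (Finset α)))
    (x : α) : unionAvoiding S x ∈ insert ∅ S := by
  rcases Finset.eq_empty_or_nonempty {A ∈ S | x ∉ A} with h | h
  · simp [unionAvoiding, h]
  · exact Finset.mem_insert_of_mem <|
      hS.finsetSup_mem h fun A hA ↦ (Finset.mem_filter.mp hA).1

lemma unionAvoiding_ne_of_mem_of_notMem {S : Finset (Finset α)} {A : Finset α} {x y : α}
    (hA : A ∈ S) (hxA : x ∈ A) (hyA : y ∉ A) : unionAvoiding S x ≠ unionAvoiding S y := by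
  intro h
  exact notMem_unionAvoiding S x (h ▸ subset_unionAvoiding hA hyA hxA)

lemma injOn_unionAvoiding {Ω : Finset α} {S : Finset (Finset α)}
    (hsep : ∀ i ∈ Ω, ∀ j ∈ Ω, i ≠ j → ∃ A ∈ S, (i ∈ A ∧ j ∉ A) ∨ (j ∈ A ∧ i ∉ A)) :
    Set.InjOn (unionAvoiding S) Ω := by
  intro x hx y hy hxy
  by_contra hne
  obtain ⟨A, hA, ⟨hxA, hyA⟩ | ⟨hyA, hxA⟩⟩ := hsep x hx y hy hne
  · exact unionAvoiding_ne_of_mem_of_notMem hA hxA hyA hxy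
  · exact unionAvoiding_ne_of_mem_of_notMem hA hyA hxA hxy.symm

end

theorem separating_unionClosed_domain_card_le_general {α : Type*} [DecidableEq α]
    (Ω : Finset α) (S : Finset (Finset α))
    (huc : ∀ A ∈ S, ∀ B ∈ S, A ∪ B ∈ S)
    (hsep : ∀ i ∈ Ω, ∀ j ∈ Ω, i ≠ j →
      ∃ A ∈ S, (i ∈ A ∧ j ∉ A) ∨ (j ∈ A ∧ i ∉ A)) :
    Ω.card ≤ S.card + 1 := by
  have hS : SupClosed (S : Set (Finset α)) := fun A hA B hB ↦ huc A hA B hB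
  calc Ω.card ≤ (insert ∅ S).card :=
        Finset.card_le_card_of_injOn (unionAvoiding S)
          (fun x _ ↦ unionAvoiding_mem_insert_empty hS x) (injOn_unionAvoiding hsep)
    _ ≤ S.card + 1 := Finset.card_insert_le _ _

/-- A separating union-closed family `S` of subsets of a finite set `Ω`
satisfies `|Ω| ≤ |S| + 1`: a union-closed family of size `m` can be at most
`(m+1)`-separating. -/
theorem separating_unionClosed_domain_card_le {α : Type*} [DecidableEq α]
    (Ω : Finset α) (S : Finset (Finset α))
    (hsub : ∀ A ∈ S, A ⊆ Ω)
    (huc : ∀ A ∈ S, ∀ B ∈ S, A ∪ B ∈ S)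
    (hsep : ∀ i ∈ Ω, ∀ j ∈ Ω, i ≠ j →
      ∃ A ∈ S, (i ∈ A ∧ j ∉ A) ∨ (j ∈ A ∧ i ∉ A)) :
    Ω.card ≤ S.card + 1 :=
  separating_unionClosed_domain_card_le_general Ω S huc hsep
end

section
/- Let t ≥ 1 and let b = b_1 > b_2 > ... > b_t ≥ 0 be integers. Define families of subsets of [b+1] = {1,...,b+1} by Q_1 = { X ∪ {b+1} : X ⊆ [b] } and, for 2 ≤ i ≤ t, Q_i = { X ∪ {b_{i−1}} : X ⊆ [b_i] }. Then the families Q_1, ..., Q_t are pairwise disjoint, and their union B = ⋃_{i=1}^t Q_i is union-closed and separates every pair of distinct elements of [b+1]; in particular |B| = ∑_{i=1}^t 2^{b_i}. -/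
/-!
Each `Q i` is a pointed cube: all sets `insert m X` with `X ⊆ s`, for an apex `m ∉ s`. For
`i < j` the whole ground `insert (m j) (s j)` of the later cube lies in the base `s i` of the
earlier one. Hence a set in `Q j` never contains the apex of `Q i` (disjointness), and the union
of a set in `Q i` with one in `Q j` is again in `Q i` (union-closedness). Separation only needs
`Q 1`, which contains `{b + 1}` and every `{b + 1, x}`.
-/

open Finset

section PointedCube

variable {α : Type*} [DecidableEq α]

def pointedCube (m : α) (s : Finset α) : Finset (Finset α) :=
  s.powerset.image (insert m)

variable {m m' : α} {s s' A A' : Finset α}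

theorem mem_pointedCube : A ∈ pointedCube m s ↔ m ∈ A ∧ A ⊆ insert m s := by
  constructor
  · intro hA
    obtain ⟨X, hX, rfl⟩ := mem_image.mp hA
    exact ⟨mem_insert_self m X, insert_subset_insert m (mem_powerset.mp hX)⟩
  · rintro ⟨hmA, hAs⟩
    refine mem_image.mpr ⟨A.erase m, mem_powerset.mpr ?_, insert_erase hmA⟩
    simpa [subset_insert_iff] using hAs

theorem card_pointedCube (hm : m ∉ s) : #(pointedCube m s) = 2 ^ #s := by
  rw [pointedCube, card_image_of_injOn, card_powerset]
  intro X hX Y hY hXY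
  have hmX : m ∉ X := fun h => hm (mem_powerset.mp hX h)
  have hmY : m ∉ Y := fun h => hm (mem_powerset.mp hY h)
  rw [← erase_insert hmX, ← erase_insert hmY]
  exact congrArg (·.erase m) hXY

theorem disjoint_pointedCube (hm : m ∉ s) (hnest : insert m' s' ⊆ s) :
    Disjoint (pointedCube m s) (pointedCube m' s') := by
  refine disjoint_left.mpr fun A hA hA' => hm (hnest ?_)
  exact (mem_pointedCube.mp hA').2 (mem_pointedCube.mp hA).1

theorem union_mem_pointedCube (hA : A ∈ pointedCube m s) (hA' : A' ⊆ insert m s) :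
    A ∪ A' ∈ pointedCube m s := by
  rw [mem_pointedCube] at hA ⊢
  exact ⟨mem_union_left A' hA.1, union_subset hA.2 hA'⟩

theorem exists_mem_pointedCube_mem_notMem {x y : α} (hx : x ∈ insert m s) (hxy : x ≠ y)
    (hy : y ≠ m) : ∃ A ∈ pointedCube m s, x ∈ A ∧ y ∉ A := by
  refine ⟨{m, x}, mem_pointedCube.mpr ⟨mem_insert_self m {x}, ?_⟩, by simp, ?_⟩
  · simpa [insert_subset_iff] using hx
  · simp [hy, hxy.symm]

theorem exists_mem_pointedCube_separating {x y : α} (hx : x ∈ insert m s)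
    (hy : y ∈ insert m s) (hxy : x ≠ y) :
    ∃ A ∈ pointedCube m s, (x ∈ A ∧ y ∉ A) ∨ (y ∈ A ∧ x ∉ A) := by
  by_cases hym : y = m
  · obtain ⟨A, hA, hyA, hxA⟩ :=
      exists_mem_pointedCube_mem_notMem hy hxy.symm (hym ▸ hxy)
    exact ⟨A, hA, Or.inr ⟨hyA, hxA⟩⟩
  · obtain ⟨A, hA, hxA, hyA⟩ := exists_mem_pointedCube_mem_notMem hx hxy hym
    exact ⟨A, hA, Or.inl ⟨hxA, hyA⟩⟩

variable {ι : Type*} [LinearOrder ι] {I : Finset ι} {a : ι → α} {t : ι → Finset α}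

theorem pairwiseDisjoint_pointedCube (ha : ∀ i ∈ I, a i ∉ t i)
    (hnest : ∀ i ∈ I, ∀ j ∈ I, i < j → insert (a j) (t j) ⊆ t i) :
    (I : Set ι).PairwiseDisjoint fun i => pointedCube (a i) (t i) := by
  intro i hi j hj hij
  rcases hij.lt_or_gt with h | h
  · exact disjoint_pointedCube (ha i hi) (hnest i hi j hj h)
  · exact (disjoint_pointedCube (ha j hj) (hnest j hj i hi h)).symm

theorem union_mem_pointedCube_of_le
    (hnest : ∀ i ∈ I, ∀ j ∈ I, i < j → insert (a j) (t j) ⊆ t i) {i j : ι} (hi : i ∈ I)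
    (hj : j ∈ I) (hij : i ≤ j) (hA : A ∈ pointedCube (a i) (t i))
    (hA' : A' ∈ pointedCube (a j) (t j)) : A ∪ A' ∈ pointedCube (a i) (t i) := by
  refine union_mem_pointedCube hA ?_
  rcases hij.eq_or_lt with rfl | h
  · exact (mem_pointedCube.mp hA').2
  · exact (mem_pointedCube.mp hA').2.trans ((hnest i hi j hj h).trans (subset_insert _ _))

theorem union_mem_biUnion_pointedCube
    (hnest : ∀ i ∈ I, ∀ j ∈ I, i < j → insert (a j) (t j) ⊆ t i)
    (hA : A ∈ I.biUnion fun i => pointedCube (a i) (t i))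
    (hA' : A' ∈ I.biUnion fun i => pointedCube (a i) (t i)) :
    A ∪ A' ∈ I.biUnion fun i => pointedCube (a i) (t i) := by
  obtain ⟨i, hi, hAi⟩ := mem_biUnion.mp hA
  obtain ⟨j, hj, hA'j⟩ := mem_biUnion.mp hA'
  rcases le_total i j with hij | hji
  · exact mem_biUnion.mpr ⟨i, hi, union_mem_pointedCube_of_le hnest hi hj hij hAi hA'j⟩
  · exact mem_biUnion.mpr ⟨j, hj, union_comm A A' ▸
      union_mem_pointedCube_of_le hnest hj hi hji hA'j hAi⟩

end PointedCube

section BaseFamily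

/-- The apex of `Q i`. -/
def baseApex (b : ℕ → ℕ) (i : ℕ) : ℕ := if i = 1 then b 1 + 1 else b (i - 1)

variable {b : ℕ → ℕ} {t i j : ℕ}

theorem baseApex_notMem_Icc (hb : StrictAntiOn b (Set.Icc 1 t)) :
    ∀ i ∈ Icc 1 t, baseApex b i ∉ Icc 1 (b i) := by
  intro i hi hmem
  rw [mem_Icc] at hi hmem
  unfold baseApex at hmem
  split_ifs at hmem with h
  · subst h; omega
  · exact (hb ⟨by omega, by omega⟩ hi (by omega)).not_ge hmem.2

theorem insert_baseApex_subset (hb : StrictAntiOn b (Set.Icc 1 t)) :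
    ∀ i ∈ Icc 1 t, ∀ j ∈ Icc 1 t, i < j →
      insert (baseApex b j) (Icc 1 (b j)) ⊆ Icc 1 (b i) := by
  intro i hi j hj hij
  rw [mem_Icc] at hi hj
  have hj' : j - 1 ∈ Set.Icc 1 t := ⟨by omega, by omega⟩
  have hapex : baseApex b j = b (j - 1) := if_neg (by omega)
  have hlt : b j < b (j - 1) := hb hj' hj (by omega)
  have hle : b (j - 1) ≤ b i := hb.antitoneOn hi hj' (by omega)
  exact insert_subset (mem_Icc.mpr ⟨by omega, by omega⟩) (Icc_subset_Icc_right (by omega))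

end BaseFamily

/-- Properties of the base family `B = ⋃ᵢ Qᵢ` of the intermediate construction:
given integers `b 1 > b 2 > … > b t ≥ 0` (`t ≥ 1`), with
`Q 1 = { X ∪ {b 1 + 1} : X ⊆ [b 1] }` and
`Q i = { X ∪ {b (i-1)} : X ⊆ [b i] }` for `2 ≤ i ≤ t`, the families `Q i` are
pairwise disjoint, and `B` is union-closed and separates every pair of
distinct elements of `[b 1 + 1]`; in particular `|B| = ∑ᵢ 2 ^ (b i)`. -/
theorem base_family_properties (t : ℕ) (ht : 1 ≤ t) (b : ℕ → ℕ)
    (hdec : ∀ i j : ℕ, 1 ≤ i → i < j → j ≤ t → b j < b i)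
    (Q : ℕ → Finset (Finset ℕ))
    (hQ1 : Q 1 = (Finset.Icc 1 (b 1)).powerset.image (fun X => insert (b 1 + 1) X))
    (hQi : ∀ i : ℕ, 2 ≤ i → i ≤ t →
      Q i = (Finset.Icc 1 (b i)).powerset.image (fun X => insert (b (i - 1)) X))
    (B : Finset (Finset ℕ)) (hB : B = (Finset.Icc 1 t).biUnion Q) :
    (∀ i ∈ Finset.Icc 1 t, ∀ j ∈ Finset.Icc 1 t, i ≠ j → Disjoint (Q i) (Q j)) ∧
    (∀ A ∈ B, ∀ A' ∈ B, A ∪ A' ∈ B) ∧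
    (∀ i ∈ Finset.Icc 1 (b 1 + 1), ∀ j ∈ Finset.Icc 1 (b 1 + 1), i ≠ j →
      ∃ A ∈ B, (i ∈ A ∧ j ∉ A) ∨ (j ∈ A ∧ i ∉ A)) ∧
    B.card = ∑ i ∈ Finset.Icc 1 t, 2 ^ b i := by
  have hb : StrictAntiOn b (Set.Icc 1 t) := fun i hi j hj hij => hdec i j hi.1 hij hj.2
  have hQ : ∀ i ∈ Icc 1 t, Q i = pointedCube (baseApex b i) (Icc 1 (b i)) := by
    intro i hi
    rcases (mem_Icc.mp hi).1.eq_or_lt with rfl | h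
    · exact hQ1
    · rw [hQi i h (mem_Icc.mp hi).2, pointedCube, baseApex, if_neg h.ne']
  have hdisj := pairwiseDisjoint_pointedCube (baseApex_notMem_Icc hb) (insert_baseApex_subset hb)
  have hB' : B = (Icc 1 t).biUnion fun i => pointedCube (baseApex b i) (Icc 1 (b i)) :=
    hB.trans (biUnion_congr rfl hQ)
  refine ⟨?_, ?_, ?_, ?_⟩
  · intro i hi j hj hij
    rw [hQ i hi, hQ j hj]
    exact hdisj hi hj hij
  · rw [hB']
    exact fun A hA A' hA' => union_mem_biUnion_pointedCube (insert_baseApex_subset hb) hA hA'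
  · intro x hx y hy hxy
    rw [← insert_Icc_right_eq_Icc_add_one (by omega)] at hx hy
    obtain ⟨A, hA, hsep⟩ := exists_mem_pointedCube_separating hx hy hxy
    refine ⟨A, hB ▸ mem_biUnion.mpr ⟨1, mem_Icc.mpr ⟨le_rfl, ht⟩, ?_⟩, hsep⟩
    rwa [hQ1]
  · rw [hB', card_biUnion hdisj]
    refine sum_congr rfl fun i hi => ?_
    rw [card_pointedCube (baseApex_notMem_Icc hb i hi), Nat.card_Icc, Nat.add_sub_cancel]
end

section
/- For every pair of integers (n, m) with n ≥ 1 and n − 1 ≤ m ≤ 2^n, there exists a union-closed family S of subsets of [n] = {1,...,n} that separates every pair of distinct elements of [n], has exactly m members, and has weight w(S) ≤ (m · log₂ m)/2 + n(n+1)/2 + m. -/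
/-!
Write `m = M + (n - k)` with `2 ^ (k - 1) ≤ M ≤ 2 ^ k`. On `[1, k]` take a union-closed family of
`M` sets assembled from half-cubes (all subsets of an interval `[l, l + t]` containing `l`): the
half-cube at `1`, of size `2 ^ (k - 1)`, followed recursively by `M - 2 ^ (k - 1)` sets on `[2, k]`.
Every set in a half-cube contains its least point, so the half-cube absorbs all later sets under
union, and its average set size is `(t + 2) / 2`; this makes the weight at most `M (k + 1) / 2`,
which is `≤ m log₂ m / 2 + m` because `2 ^ (k - 1) ≤ m`. The prefixes `[1, j]` for `k < j ≤ n`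
contain everything below them, separate each `j` from the points before it, and weigh at most
`n (n + 1) / 2`. The case `m = n - 1` is the bare chain `[1, 1] ⊂ ⋯ ⊂ [1, n - 1]`.
-/

open Finset

def halfCube (l t : ℕ) : Finset (Finset ℕ) :=
  (Ioc l (l + t)).powerset.image (insert l)

section halfCube

variable {l t : ℕ} {A C : Finset ℕ}

lemma mem_halfCube : A ∈ halfCube l t ↔ l ∈ A ∧ A ⊆ Icc l (l + t) := by
  constructor
  · simp only [halfCube, mem_image, mem_powerset]
    rintro ⟨B, hB, rfl⟩
    exact ⟨mem_insert_self l B, insert_subset (by simp) (hB.trans Ioc_subset_Icc_self)⟩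
  · rintro ⟨hlA, hA⟩
    refine mem_image.2 ⟨A.erase l, mem_powerset.2 fun x hx => ?_, insert_erase hlA⟩
    have := hA (mem_of_mem_erase hx)
    have := ne_of_mem_erase hx
    simp only [mem_Icc, mem_Ioc] at *
    omega

lemma insert_injOn_powerset_Ioc :
    Set.InjOn (insert l) ((Ioc l (l + t)).powerset : Set (Finset ℕ)) := by
  intro B hB B' hB' h
  have hl : ∀ D ∈ (Ioc l (l + t)).powerset, l ∉ D := fun D hD hlD => by
    simpa using mem_powerset.1 hD hlD
  simpa [erase_insert (hl B hB), erase_insert (hl B' hB')] using congrArg (·.erase l) h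

lemma card_halfCube : #(halfCube l t) = 2 ^ t := by
  rw [halfCube, card_image_of_injOn insert_injOn_powerset_Ioc, card_powerset, Nat.card_Ioc,
    Nat.add_sub_cancel_left]

lemma two_mul_sum_card_halfCube : 2 * ∑ A ∈ halfCube l t, #A = (t + 2) * 2 ^ t := by
  have hcard : ∀ B ∈ (Ioc l (l + t)).powerset, #(insert l B) = #B + 1 := fun B hB =>
    card_insert_of_notMem fun hlB => by simpa using mem_powerset.1 hB hlB
  rw [halfCube, sum_image insert_injOn_powerset_Ioc, sum_congr rfl hcard,
    sum_powerset_apply_card (· + 1), Nat.card_Ioc, Nat.add_sub_cancel_left]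
  simp only [smul_eq_mul, mul_add, mul_one, sum_add_distrib, Nat.sum_range_choose]
  simp_rw [mul_comm (t.choose _)]
  rw [Nat.sum_range_mul_choose]
  rcases t with _ | t
  · simp
  · rw [Nat.add_sub_cancel, pow_succ]
    ring

lemma union_mem_halfCube (hA : A ∈ halfCube l t) (hC : C ⊆ Icc l (l + t)) :
    A ∪ C ∈ halfCube l t := by
  rw [mem_halfCube] at hA ⊢
  exact ⟨mem_union_left C hA.1, union_subset hA.2 hC⟩

lemma exists_mem_halfCube_mem_notMem {i j : ℕ} (hi : i ∈ Icc l (l + t)) (hij : i < j) :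
    ∃ A ∈ halfCube l t, i ∈ A ∧ j ∉ A := by
  rw [mem_Icc] at hi
  refine ⟨{l, i}, mem_halfCube.2 ⟨by simp, ?_⟩, by simp, by simp; omega⟩
  intro x hx
  simp only [mem_insert, mem_singleton] at hx
  rw [mem_Icc]
  omega

end halfCube

/-- For `M ≤ 2 ^ t`, a union-closed family of `M` subsets of `[l, l + t)`; the half-cubes it uses
follow the binary digits of `M`. -/
def cubeFamily : ℕ → ℕ → ℕ → Finset (Finset ℕ)
  | _, 0, M => if M = 0 then ∅ else {∅}
  | l, t + 1, M =>
    if 2 ^ t ≤ M then halfCube l t ∪ cubeFamily (l + 1) t (M - 2 ^ t) else cubeFamily (l + 1) t M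

section cubeFamily

variable {l t M : ℕ}

lemma subset_Ico_of_mem_cubeFamily {A : Finset ℕ} (hA : A ∈ cubeFamily l t M) :
    A ⊆ Ico l (l + t) := by
  induction t generalizing l M with
  | zero => aesop (add simp cubeFamily)
  | succ t ih =>
    have shift : Ico (l + 1) (l + 1 + t) ⊆ Ico l (l + (t + 1)) :=
      Ico_subset_Ico (by omega) (by omega)
    rw [cubeFamily] at hA
    split_ifs at hA
    · rcases mem_union.1 hA with hA | hA
      · intro x hx
        have := (mem_halfCube.1 hA).2 hx
        simp only [mem_Icc, mem_Ico] at this ⊢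
        omega
      · exact (ih hA).trans shift
    · exact (ih hA).trans shift

lemma disjoint_halfCube_cubeFamily {t' M : ℕ} :
    Disjoint (halfCube l t) (cubeFamily (l + 1) t' M) :=
  disjoint_left.2 fun _ hA hA' => by
    simpa using subset_Ico_of_mem_cubeFamily hA' (mem_halfCube.1 hA).1

lemma supClosed_cubeFamily : SupClosed (cubeFamily l t M : Set (Finset ℕ)) := by
  induction t generalizing l M with
  | zero => unfold cubeFamily; split_ifs <;> simp
  | succ t ih =>
    have hsub : ∀ A ∈ cubeFamily l (t + 1) M, A ⊆ Icc l (l + t) := fun A hA x hx => by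
      have := subset_Ico_of_mem_cubeFamily hA hx
      simp only [mem_Icc, mem_Ico] at this ⊢
      omega
    intro A hA B hB
    have hAl := hsub A hA
    have hBl := hsub B hB
    simp only [mem_coe, cubeFamily] at hA hB ⊢
    split_ifs at hA hB ⊢
    · rcases mem_union.1 hA with hA | hA
      · exact mem_union_left _ (union_mem_halfCube hA hBl)
      rcases mem_union.1 hB with hB | hB
      · exact mem_union_left _ (sup_comm A B ▸ union_mem_halfCube hB hAl)
      · exact mem_union_right _ (ih hA hB)
    · exact ih hA hB

lemma card_cubeFamily (hM : M ≤ 2 ^ t) : #(cubeFamily l t M) = M := by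
  induction t generalizing l M with
  | zero => unfold cubeFamily; split_ifs <;> simp <;> omega
  | succ t ih =>
    rw [cubeFamily]
    split_ifs with h
    · rw [card_union_of_disjoint disjoint_halfCube_cubeFamily, card_halfCube, ih (by omega)]
      omega
    · exact ih (by omega)

lemma two_mul_sum_card_cubeFamily_le (hM : M ≤ 2 ^ t) :
    2 * ∑ A ∈ cubeFamily l t M, #A ≤ M * (t + 1) := by
  induction t generalizing l M with
  | zero => unfold cubeFamily; split_ifs <;> simp
  | succ t ih =>
    rw [cubeFamily]
    split_ifs with h
    · rw [sum_union disjoint_halfCube_cubeFamily, mul_add, two_mul_sum_card_halfCube]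
      have := ih (l := l + 1) (M := M - 2 ^ t) (by rw [pow_succ] at hM; omega)
      calc (t + 2) * 2 ^ t + 2 * ∑ A ∈ cubeFamily (l + 1) t (M - 2 ^ t), #A
          ≤ (t + 2) * 2 ^ t + (M - 2 ^ t) * (t + 1) := by omega
        _ ≤ M * (t + 1 + 1) := by
          obtain ⟨r, rfl⟩ := Nat.exists_eq_add_of_le h
          simp only [Nat.add_sub_cancel_left]
          nlinarith
    · exact (ih (by omega)).trans (Nat.mul_le_mul_left M (by omega))

lemma halfCube_subset_cubeFamily (hM : 2 ^ t ≤ M) : halfCube l t ⊆ cubeFamily l (t + 1) M := by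
  rw [cubeFamily, if_pos hM]
  exact subset_union_left

lemma exists_mem_cubeFamily_mem_notMem {i j : ℕ} (hM : 2 ^ t ≤ M) (hi : i ∈ Icc l (l + t))
    (hij : i < j) : ∃ A ∈ cubeFamily l (t + 1) M, i ∈ A ∧ j ∉ A := by
  obtain ⟨A, hA, hiA, hjA⟩ := exists_mem_halfCube_mem_notMem hi hij
  exact ⟨A, halfCube_subset_cubeFamily hM hA, hiA, hjA⟩

end cubeFamily

def prefixChain (a b : ℕ) : Finset (Finset ℕ) :=
  (Ioc a b).image (Icc 1 ·)

section prefixChain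

variable {a b : ℕ} {F : Finset (Finset ℕ)}

lemma Icc_one_injective : Function.Injective (Icc 1 : ℕ → Finset ℕ) := fun i j h => by
  simpa using congrArg card h

lemma mem_prefixChain {A : Finset ℕ} :
    A ∈ prefixChain a b ↔ ∃ j, (a < j ∧ j ≤ b) ∧ Icc 1 j = A := by
  simp [prefixChain]

lemma card_prefixChain : #(prefixChain a b) = b - a := by
  rw [prefixChain, card_image_of_injective _ Icc_one_injective, Nat.card_Ioc]

lemma two_mul_sum_card_prefixChain_le : 2 * ∑ A ∈ prefixChain a b, #A ≤ b * (b + 1) := by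
  rw [prefixChain, sum_image Icc_one_injective.injOn]
  simp only [Nat.card_Icc, Nat.add_sub_cancel]
  calc 2 * ∑ j ∈ Ioc a b, j ≤ 2 * ∑ j ∈ range (b + 1), j := by
        gcongr
        intro j hj
        simp only [mem_Ioc, mem_range] at hj ⊢
        omega
    _ = b * (b + 1) := by rw [mul_comm, sum_range_id_mul_two, Nat.add_sub_cancel, mul_comm]

lemma exists_mem_union_prefixChain_mem_notMem {n i j : ℕ}
    (hFsep : ∀ i ∈ Icc 1 a, ∀ j, i < j → ∃ A ∈ F, i ∈ A ∧ j ∉ A) (hnb : n ≤ b + 1)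
    (hi : 1 ≤ i) (hij : i < j) (hjn : j ≤ n) : ∃ A ∈ F ∪ prefixChain a b, i ∈ A ∧ j ∉ A := by
  by_cases hia : i ≤ a
  · obtain ⟨A, hA, hiA, hjA⟩ := hFsep i (mem_Icc.2 ⟨hi, hia⟩) j hij
    exact ⟨A, mem_union_left _ hA, hiA, hjA⟩
  · refine ⟨Icc 1 i, mem_union_right _ (mem_prefixChain.2 ⟨i, by omega, rfl⟩),
      mem_Icc.2 ⟨hi, le_rfl⟩, fun hj => ?_⟩
    rw [mem_Icc] at hj
    omega

variable (hF : ∀ A ∈ F, A ⊆ Icc 1 a)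
include hF

lemma disjoint_prefixChain : Disjoint F (prefixChain a b) := disjoint_left.2 fun A hA hA' => by
  obtain ⟨j, hj, rfl⟩ := mem_prefixChain.1 hA'
  have := hF _ hA (mem_Icc.2 ⟨by omega, le_rfl⟩)
  simp only [mem_Icc] at this
  omega

lemma supClosed_union_prefixChain (hFsup : SupClosed (F : Set (Finset ℕ))) :
    SupClosed ((F ∪ prefixChain a b : Finset (Finset ℕ)) : Set (Finset ℕ)) := by
  have absorb : ∀ A ∈ F, ∀ j, a < j → A ∪ Icc 1 j = Icc 1 j := fun A hA j hj =>
    union_eq_right.2 ((hF A hA).trans (Icc_subset_Icc_right hj.le))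
  intro A hA B hB
  simp only [coe_union, Set.mem_union, mem_coe, mem_prefixChain] at hA hB ⊢
  rcases hA with hA | ⟨i, hi, rfl⟩ <;> rcases hB with hB | ⟨j, hj, rfl⟩
  · exact .inl (hFsup hA hB)
  · exact .inr ⟨j, hj, (absorb A hA j hj.1).symm⟩
  · exact .inr ⟨i, hi, by rw [sup_eq_union, union_comm, absorb B hB i hi.1]⟩
  · refine .inr ⟨max i j, by omega, ?_⟩
    ext x
    simp only [mem_Icc, sup_eq_union, mem_union]
    omega

end prefixChain

lemma natCast_mul_le_mul_logb_add {M m t : ℕ} (hMm : M ≤ m) (ht : 2 ^ t ≤ m) :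
    ((M * (t + 2) : ℕ) : ℝ) ≤ m * Real.logb 2 m + 2 * m := by
  have hm : (0 : ℝ) < m := by exact_mod_cast Nat.one_le_two_pow.trans ht
  have hlog : (t : ℝ) ≤ Real.logb 2 m := by
    rw [Real.le_logb_iff_rpow_le one_lt_two hm, Real.rpow_natCast]
    exact_mod_cast ht
  push_cast
  calc (M : ℝ) * (t + 2) ≤ m * (t + 2) := by gcongr
    _ ≤ m * (Real.logb 2 m + 2) := by gcongr
    _ = m * Real.logb 2 m + 2 * m := by ring

theorem exists_of_union_prefixChain {n m a b c : ℕ} (F : Finset (Finset ℕ))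
    (hF : ∀ A ∈ F, A ⊆ Icc 1 a) (hFsup : SupClosed (F : Set (Finset ℕ)))
    (hFsep : ∀ i ∈ Icc 1 a, ∀ j, i < j → ∃ A ∈ F, i ∈ A ∧ j ∉ A)
    (hab : a ≤ b) (hbn : b ≤ n) (hnb : n ≤ b + 1) (hcard : #F + (b - a) = m)
    (hw : 2 * ∑ A ∈ F, #A ≤ c) (hc : (c : ℝ) ≤ m * Real.logb 2 m + 2 * m) :
    ∃ S : Finset (Finset ℕ),
      (∀ A ∈ S, A ⊆ Icc 1 n) ∧
      (∀ A ∈ S, ∀ B ∈ S, A ∪ B ∈ S) ∧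
      (∀ i ∈ Icc 1 n, ∀ j ∈ Icc 1 n, i ≠ j →
        ∃ A ∈ S, (i ∈ A ∧ j ∉ A) ∨ (j ∈ A ∧ i ∉ A)) ∧
      #S = m ∧
      (∑ A ∈ S, (#A : ℝ)) ≤ (m : ℝ) * Real.logb 2 m / 2 + (n : ℝ) * ((n : ℝ) + 1) / 2 + m := by
  refine ⟨F ∪ prefixChain a b, ?_, fun A hA B hB => supClosed_union_prefixChain hF hFsup hA hB,
    ?_, ?_, ?_⟩
  · intro A hA
    rcases mem_union.1 hA with hA | hA
    · exact (hF A hA).trans (Icc_subset_Icc_right (hab.trans hbn))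
    · obtain ⟨j, hj, rfl⟩ := mem_prefixChain.1 hA
      exact Icc_subset_Icc_right (by omega)
  · intro i hi j hj hij
    rw [mem_Icc] at hi hj
    rcases hij.lt_or_gt with h | h
    · obtain ⟨A, hA, hiA, hjA⟩ := exists_mem_union_prefixChain_mem_notMem hFsep hnb hi.1 h hj.2
      exact ⟨A, hA, .inl ⟨hiA, hjA⟩⟩
    · obtain ⟨A, hA, hjA, hiA⟩ := exists_mem_union_prefixChain_mem_notMem hFsep hnb hj.1 h hi.2
      exact ⟨A, hA, .inr ⟨hjA, hiA⟩⟩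
  · rw [card_union_of_disjoint (disjoint_prefixChain hF), card_prefixChain, hcard]
  · have hW : 2 * ∑ A ∈ F ∪ prefixChain a b, #A ≤ c + n * (n + 1) := by
      have := two_mul_sum_card_prefixChain_le (a := a) (b := b)
      have : b * (b + 1) ≤ n * (n + 1) := Nat.mul_le_mul hbn (by omega)
      rw [sum_union (disjoint_prefixChain hF), mul_add]
      omega
    have hWR : (2 * ∑ A ∈ F ∪ prefixChain a b, #A : ℕ) ≤ (c + n * (n + 1) : ℝ) := by
      exact_mod_cast hW
    push_cast at hWR
    linarith

lemma exists_two_pow_le_and_le_two_pow {n m : ℕ} (hn : 1 ≤ n) (hnm : n ≤ m) (hm : m ≤ 2 ^ n) :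
    ∃ t < n, 2 ^ t + n ≤ m + t + 1 ∧ m + t + 1 ≤ 2 ^ (t + 1) + n := by
  classical
  have hP : ∃ t, m + t + 1 ≤ 2 ^ (t + 1) + n := ⟨n - 1, by rw [Nat.sub_add_cancel hn]; omega⟩
  refine ⟨Nat.find hP, ?_, ?_, Nat.find_spec hP⟩
  · have := Nat.find_min' hP (m := n - 1) (by rw [Nat.sub_add_cancel hn]; omega)
    omega
  · rcases h : Nat.find hP with _ | s
    · simp only [pow_zero]
      omega
    · have := Nat.find_min hP (m := s) (by omega)
      omega

/-- For every satisfiable pair `(n, m)` (i.e. `n ≥ 1` and `n - 1 ≤ m ≤ 2^n`)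
there is an `n`-separating union-closed family on `[n]` of size `m` with
weight at most `m·log₂ m / 2 + n(n+1)/2 + m`. -/
theorem exists_separating_unionClosed_small_weight (n m : ℕ)
    (hn : 1 ≤ n) (hmn : n - 1 ≤ m) (hm : m ≤ 2 ^ n) :
    ∃ S : Finset (Finset ℕ),
      (∀ A ∈ S, A ⊆ Finset.Icc 1 n) ∧
      (∀ A ∈ S, ∀ B ∈ S, A ∪ B ∈ S) ∧
      (∀ i ∈ Finset.Icc 1 n, ∀ j ∈ Finset.Icc 1 n, i ≠ j →
        ∃ A ∈ S, (i ∈ A ∧ j ∉ A) ∨ (j ∈ A ∧ i ∉ A)) ∧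
      S.card = m ∧
      (∑ A ∈ S, (A.card : ℝ))
        ≤ (m : ℝ) * Real.logb 2 m / 2 + (n : ℝ) * ((n : ℝ) + 1) / 2 + m := by
  rcases Nat.lt_or_ge m n with hlt | hnm
  · refine exists_of_union_prefixChain (a := 0) (b := n - 1) (c := 0) ∅ (by simp) (by simp)
      (by simp) (Nat.zero_le _) (Nat.sub_le n 1) (by omega) (by simp; omega) (by simp) ?_
    rw [Nat.cast_zero, Real.logb]
    positivity
  · obtain ⟨t, htn, hlo, hhi⟩ := exists_two_pow_le_and_le_two_pow hn hnm hm
    set M := m + t + 1 - n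
    have hIco : Ico 1 (1 + (t + 1)) = Icc 1 (t + 1) := by ext; simp only [mem_Ico, mem_Icc]; omega
    refine exists_of_union_prefixChain (a := t + 1) (b := n) (c := M * (t + 2))
      (cubeFamily 1 (t + 1) M) (fun A hA => hIco ▸ subset_Ico_of_mem_cubeFamily hA)
      supClosed_cubeFamily (fun i hi j => exists_mem_cubeFamily_mem_notMem (by omega)
        (by rwa [add_comm 1 t]))
      htn le_rfl (by omega) (by rw [card_cubeFamily (by omega)]; omega)
      (two_mul_sum_card_cubeFamily_le (by omega))
      (natCast_mul_le_mul_logb_add (by omega) (by omega))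
end

section
/- For every integer r ≥ 2 there exists a separating union-closed family S on a finite set Ω with |S| = 2^r and |Ω| = ⌈√(r·2^r)⌉ whose average degree satisfies (1/|Ω|) · ∑_{x ∈ Ω} d_S(x) ≤ √(m · log₂ m) + 3·√(m / log₂ m), where m = 2^r. In particular there exist arbitrarily large separating union-closed families whose average degree is at most √(m log₂ m) + 3√(m/log₂ m). -/
/-!
Write `[k] = {0, …, k-1}`, `x = √(r·2^r)`, `n = ⌈x⌉` and `d = n - r`. The family consists of the
`2^r - d` subsets of `[r]` whose binary value `∑ 2^i` is at least `d`, together with the chain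
`[r+1] ⊂ ⋯ ⊂ [n]` of `d` initial segments. The first part is an up-set of the powerset of `[r]` and
every member of the chain contains `[r]`, so the family is union-closed; the sets containing
`r - 1` have binary value at least `2^(r-1) ≥ d`, which is enough to separate all pairs.
The total size is at most `r·2^(r-1) + n(n+1)/2 ≤ (x² + n(n+1))/2 ≤ n(x+1)`,
so the average degree is at most `x + 1`.
-/

open Finset

theorem Finset.sum_card_filter_mem_eq_sum_card {α : Type*} [DecidableEq α] {s : Finset α}
    {B : Finset (Finset α)} (h : ∀ t ∈ B, t ⊆ s) : ∑ a ∈ s, #{t ∈ B | a ∈ t} = ∑ t ∈ B, #t := by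
  simp_rw [card_eq_sum_ones, sum_filter]
  rw [sum_comm]
  refine sum_congr rfl fun t ht ↦ ?_
  rw [← sum_filter, filter_mem_eq_inter, inter_eq_right.2 (h t ht)]

theorem Nat.ceil_sqrt_le_iff {a b : ℕ} : ⌈√(a : ℝ)⌉₊ ≤ b ↔ a ≤ b ^ 2 := by
  rw [Nat.ceil_le, Real.sqrt_le_left (Nat.cast_nonneg b)]
  exact_mod_cast Iff.rfl

theorem Nat.mul_two_pow_le_sq {r : ℕ} (hr : 1 ≤ r) : r * 2 ^ r ≤ (2 ^ (r - 1) + r) ^ 2 := by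
  obtain ⟨s, rfl⟩ := Nat.exists_eq_add_of_le' hr
  rw [Nat.add_sub_cancel, Nat.pow_succ]
  generalize 2 ^ s = p
  nlinarith

theorem div_le_add_one_of_two_mul_le {x n T : ℝ} (hx : 0 ≤ x) (hxn : x ≤ n) (hnx : n ≤ x + 1)
    (hT : 2 * T ≤ x ^ 2 + n * (n + 1)) : T / n ≤ x + 1 := by
  refine div_le_of_le_mul₀ (hx.trans hxn) (by linarith) ?_
  nlinarith [mul_nonneg hx (sub_nonneg.2 hxn)]

namespace SmallAverageDegree

def bitsetsAtLeast (r d : ℕ) : Finset (Finset ℕ) :=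
  {A ∈ (range r).powerset | d ≤ ∑ i ∈ A, 2 ^ i}

def initialSegments (a b : ℕ) : Finset (Finset ℕ) :=
  (Icc a b).image range

def family (r n : ℕ) : Finset (Finset ℕ) :=
  bitsetsAtLeast r (n - r) ∪ initialSegments (r + 1) n

variable {r d a b n : ℕ} {A B : Finset ℕ}

theorem mem_bitsetsAtLeast : A ∈ bitsetsAtLeast r d ↔ A ⊆ range r ∧ d ≤ ∑ i ∈ A, 2 ^ i := by
  rw [bitsetsAtLeast, mem_filter, mem_powerset]

theorem mem_initialSegments : B ∈ initialSegments a b ↔ ∃ k, a ≤ k ∧ k ≤ b ∧ range k = B := by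
  simp [initialSegments, and_assoc]

theorem union_mem_bitsetsAtLeast (hA : A ∈ bitsetsAtLeast r d) (hB : B ∈ bitsetsAtLeast r d) :
    A ∪ B ∈ bitsetsAtLeast r d := by
  rw [mem_bitsetsAtLeast] at *
  exact ⟨union_subset hA.1 hB.1, hA.2.trans (sum_le_sum_of_subset subset_union_left)⟩

theorem mem_bitsetsAtLeast_of_pred_mem (hA : A ⊆ range r) (hr : r - 1 ∈ A) (hd : d ≤ 2 ^ (r - 1)) :
    A ∈ bitsetsAtLeast r d :=
  mem_bitsetsAtLeast.2 ⟨hA, hd.trans (single_le_sum (fun _ _ ↦ Nat.zero_le _) hr)⟩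

theorem card_bitsetsAtLeast : #(bitsetsAtLeast r d) = 2 ^ r - d := by
  rw [← Nat.card_Ico]
  refine card_nbij' (fun A ↦ ∑ i ∈ A, 2 ^ i) (fun v ↦ v.bitIndices.toFinset) ?_ ?_ ?_ ?_
  · intro A hA
    rw [mem_coe, mem_bitsetsAtLeast] at hA
    exact mem_Ico.2 ⟨hA.2, Nat.geomSum_lt le_rfl fun k hk ↦ mem_range.1 (hA.1 hk)⟩
  · intro v hv
    rw [mem_coe, mem_Ico] at hv
    refine mem_bitsetsAtLeast.2 ⟨fun k hk ↦ ?_, by simpa using hv.1⟩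
    have := Nat.two_pow_le_of_mem_bitIndices (List.mem_toFinset.1 hk)
    exact mem_range.2 ((Nat.pow_lt_pow_iff_right (by norm_num)).1 (this.trans_lt hv.2))
  · intro A _
    simp
  · intro v _
    simp

theorem sum_card_bitsetsAtLeast_le : ∑ A ∈ bitsetsAtLeast r d, #A ≤ r * 2 ^ (r - 1) :=
  calc ∑ A ∈ bitsetsAtLeast r d, #A ≤ ∑ A ∈ (range r).powerset, #A :=
        sum_le_sum_of_subset (filter_subset _ _)
    _ = r * 2 ^ (r - 1) := by
        refine (sum_powerset_apply_card fun k ↦ k).trans ?_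
        simp [← Nat.sum_range_mul_choose, mul_comm]

theorem card_initialSegments : #(initialSegments a b) = b + 1 - a := by
  rw [initialSegments, card_image_of_injective _ strictMono_range.injective, Nat.card_Icc]

theorem sum_card_initialSegments_le : (∑ B ∈ initialSegments a b, #B) * 2 ≤ b * (b + 1) :=
  calc (∑ B ∈ initialSegments a b, #B) * 2 = (∑ k ∈ Icc a b, k) * 2 := by
        rw [initialSegments, sum_image fun _ _ _ _ h ↦ strictMono_range.injective h]
        simp
    _ ≤ (∑ k ∈ range (b + 1), k) * 2 := by
        gcongr
        exact fun k hk ↦ mem_range.2 (Nat.lt_succ_of_le (mem_Icc.1 hk).2)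
    _ = b * (b + 1) := by rw [sum_range_id_mul_two, Nat.add_sub_cancel, mul_comm]

theorem subset_range_of_mem_family (hrn : r ≤ n) (hA : A ∈ family r n) : A ⊆ range n := by
  rcases mem_union.1 hA with hA | hA
  · exact (mem_bitsetsAtLeast.1 hA).1.trans (range_subset_range.2 hrn)
  · obtain ⟨k, -, hkn, rfl⟩ := mem_initialSegments.1 hA
    exact range_subset_range.2 hkn

theorem union_mem_family (hA : A ∈ family r n) (hB : B ∈ family r n) : A ∪ B ∈ family r n := by
  have absorb : ∀ {C k}, C ∈ bitsetsAtLeast r (n - r) → r + 1 ≤ k → C ∪ range k = range k :=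
    fun hC hk ↦ union_eq_right.2 ((mem_bitsetsAtLeast.1 hC).1.trans (range_subset_range.2 (by omega)))
  rcases mem_union.1 hA with hA' | hA' <;> rcases mem_union.1 hB with hB' | hB'
  · exact mem_union_left _ (union_mem_bitsetsAtLeast hA' hB')
  · obtain ⟨k, hk, -, rfl⟩ := mem_initialSegments.1 hB'
    rwa [absorb hA' hk]
  · obtain ⟨k, hk, -, rfl⟩ := mem_initialSegments.1 hA'
    rwa [union_comm, absorb hB' hk]
  · obtain ⟨k, -, -, rfl⟩ := mem_initialSegments.1 hA'
    obtain ⟨l, -, -, rfl⟩ := mem_initialSegments.1 hB'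
    rcases le_total k l with hkl | hlk
    · rwa [union_eq_right.2 (range_subset_range.2 hkl)]
    · rwa [union_eq_left.2 (range_subset_range.2 hlk)]

theorem exists_mem_family_mem_notMem {i j : ℕ} (hd : n - r ≤ 2 ^ (r - 1)) (hij : i < j)
    (hjn : j < n) : ∃ A ∈ family r n, (i ∈ A ∧ j ∉ A) ∨ (j ∈ A ∧ i ∉ A) := by
  rcases lt_or_ge j r with hjr | hrj
  · refine ⟨Ico j r, mem_union_left _ (mem_bitsetsAtLeast_of_pred_mem ?_ ?_ hd), ?_⟩ <;>
      simp [subset_iff] <;> omega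
  rcases lt_or_ge i r with hir | hri
  · refine ⟨range r, mem_union_left _ (mem_bitsetsAtLeast_of_pred_mem subset_rfl ?_ hd), ?_⟩ <;>
      simp <;> omega
  · refine ⟨range (i + 1), mem_union_right _ (mem_initialSegments.2 ⟨i + 1, ?_, ?_, rfl⟩), ?_⟩ <;>
      simp <;> omega

theorem disjoint_bitsetsAtLeast_initialSegments (ha : r < a) :
    Disjoint (bitsetsAtLeast r d) (initialSegments a b) := by
  refine disjoint_left.2 fun A hA hA' ↦ ?_
  obtain ⟨k, hk, -, rfl⟩ := mem_initialSegments.1 hA'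
  have := (mem_bitsetsAtLeast.1 hA).1 (mem_range.2 (ha.trans_le hk))
  simp at this

theorem card_family (hrn : r ≤ n) (hd : n - r ≤ 2 ^ r) : #(family r n) = 2 ^ r := by
  rw [family, card_union_of_disjoint (disjoint_bitsetsAtLeast_initialSegments r.lt_succ_self),
    card_bitsetsAtLeast, card_initialSegments]
  omega

theorem sum_card_family_le (hr : 1 ≤ r) :
    (∑ A ∈ family r n, #A) * 2 ≤ r * 2 ^ r + n * (n + 1) := by
  have hpow : 2 ^ (r - 1) * 2 = 2 ^ r := by rw [← pow_succ, Nat.sub_add_cancel hr]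
  calc (∑ A ∈ family r n, #A) * 2
      = (∑ A ∈ bitsetsAtLeast r (n - r), #A) * 2 + (∑ B ∈ initialSegments (r + 1) n, #B) * 2 := by
        rw [family, sum_union (disjoint_bitsetsAtLeast_initialSegments r.lt_succ_self), add_mul]
    _ ≤ r * 2 ^ (r - 1) * 2 + n * (n + 1) :=
        add_le_add (Nat.mul_le_mul_right 2 sum_card_bitsetsAtLeast_le) sum_card_initialSegments_le
    _ = r * 2 ^ r + n * (n + 1) := by rw [mul_assoc, hpow]

end SmallAverageDegree

open SmallAverageDegree in
/-- For every `r ≥ 2` there is a separating union-closed family `S` on a set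
`Ω` with `|S| = 2^r` and `|Ω| = ⌈√(r·2^r)⌉` whose average degree is at most
`√(m·log₂ m) + 3·√(m/log₂ m)` where `m = 2^r`. -/
theorem exists_separating_unionClosed_small_average_degree (r : ℕ) (hr : 2 ≤ r) :
    ∃ (Ω : Finset ℕ) (S : Finset (Finset ℕ)),
      (∀ A ∈ S, A ⊆ Ω) ∧
      (∀ A ∈ S, ∀ B ∈ S, A ∪ B ∈ S) ∧
      (∀ i ∈ Ω, ∀ j ∈ Ω, i ≠ j →
        ∃ A ∈ S, (i ∈ A ∧ j ∉ A) ∨ (j ∈ A ∧ i ∉ A)) ∧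
      S.card = 2 ^ r ∧
      Ω.card = ⌈Real.sqrt ((r : ℝ) * 2 ^ r)⌉₊ ∧
      (1 / (Ω.card : ℝ)) * ∑ x ∈ Ω, ((S.filter (fun A => x ∈ A)).card : ℝ)
        ≤ Real.sqrt ((2 ^ r : ℝ) * Real.logb 2 (2 ^ r))
          + 3 * Real.sqrt ((2 ^ r : ℝ) / Real.logb 2 (2 ^ r)) := by
  have hr1 : 1 ≤ r := by omega
  set x := √((r : ℝ) * 2 ^ r)
  set n := ⌈x⌉₊
  have hx : x = √((r * 2 ^ r : ℕ) : ℝ) := by push_cast; rfl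
  have hrn : r ≤ n := by
    have : r * 2 ^ r ≤ n ^ 2 := Nat.ceil_sqrt_le_iff.1 (by rw [← hx])
    nlinarith [Nat.lt_two_pow_self (n := r)]
  have hnr : n - r ≤ 2 ^ (r - 1) := by
    have := Nat.ceil_sqrt_le_iff.2 (Nat.mul_two_pow_le_sq hr1)
    rw [← hx] at this
    omega
  have hsep (i j : ℕ) (hij : i < j) (hj : j ∈ range n) :=
    exists_mem_family_mem_notMem hnr hij (mem_range.1 hj)
  refine ⟨range n, family r n, fun A ↦ subset_range_of_mem_family hrn,
    fun A hA B hB ↦ union_mem_family hA hB, fun i hi j hj hij ↦ ?_,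
    card_family hrn (hnr.trans (Nat.pow_le_pow_right two_pos (Nat.sub_le r 1))), card_range n, ?_⟩
  · rcases hij.lt_or_gt with h | h
    · exact hsep i j h hj
    · obtain ⟨A, hA, hA'⟩ := hsep j i h hi
      exact ⟨A, hA, hA'.symm⟩
  have hT : 2 * ((∑ A ∈ family r n, #A : ℕ) : ℝ) ≤ x ^ 2 + n * (n + 1) := by
    rw [Real.sq_sqrt (by positivity), mul_comm]
    exact_mod_cast sum_card_family_le hr1
  have havg := div_le_add_one_of_two_mul_le (Real.sqrt_nonneg _) (Nat.le_ceil x)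
    (Nat.ceil_lt_add_one (Real.sqrt_nonneg _)).le hT
  have hone : 1 ≤ 3 * √((2 : ℝ) ^ r / r) := by
    have : (r : ℝ) ≤ 2 ^ r := by exact_mod_cast Nat.lt_two_pow_self.le
    nlinarith [Real.one_le_sqrt.2 ((one_le_div₀ (by positivity)).2 this)]
  have hlog : Real.logb 2 ((2 : ℝ) ^ r) = r := by simp [Real.logb_pow]
  rw [card_range, hlog, mul_comm _ (r : ℝ), ← Nat.cast_sum,
    sum_card_filter_mem_eq_sum_card fun A ↦ subset_range_of_mem_family hrn, one_div_mul_eq_div]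
  linarith
end

section
/- Let l ≥ 1 be an integer and let S be a finite union-closed family of finite sets with |S| = m ≥ 2 such that (log₂ m)/2 ≥ l − 1. Then the l-fold weight satisfies w_l(S) = ∑_{A ∈ S} C(|A|, l) ≥ m · (1/l!) · ∏_{i=0}^{l−1} ( (log₂ m)/2 − i ), i.e., w_l(S) ≥ m times the generalized binomial coefficient C((log₂ m)/2, l). -/
/-!
Reimer: a union-closed family of `m` sets has average set size at least `(log₂ m)/2`.
Compressing `S` upwards one coordinate `x` at a time (moving `A` up to `A ∪ {x}` unless that set
is already taken) yields an injection `φ` with `A ⊆ φ A`, pairwise disjoint intervals `[A, φ A]`,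
and image an up-set of `2^V`. Disjointness gives `∑ 2^|φ A \ A| ≤ 2^|V|`, so by concavity of `log`
the compression adds at most `m|V| - m log₂ m` elements in total, while an up-set of size `m` has
total size at least `m|V| - (m log₂ m)/2`.

The descending Pochhammer polynomial `x(x-1)⋯(x-l+1)` is monotone and convex on `[l-1, ∞)`, so
Jensen's inequality turns this bound on the average of `|A|` into the bound on the average of
`C(|A|, l)`.
-/

open Finset Real

namespace UnionClosed

lemma self_le_logb_one_add {t : ℝ} (h0 : 0 ≤ t) (h1 : t ≤ 1) : t ≤ logb 2 (1 + t) := by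
  rw [le_logb_iff_rpow_le one_lt_two (by linarith)]
  simpa [one_add_one_eq_two] using rpow_one_add_le_one_add_mul_self (s := 1) (by norm_num) h0 h1

lemma two_mul_add_mul_logb_add_mul_logb_le {a b : ℝ} (ha : 0 ≤ a) (hab : a ≤ b) :
    2 * a + a * logb 2 a + b * logb 2 b ≤ (a + b) * logb 2 (a + b) := by
  obtain rfl | ha := ha.eq_or_lt
  · simp
  have hb : 0 < b := ha.trans_le hab
  have hA : 1 ≤ logb 2 ((a + b) / a) := by
    rw [le_logb_iff_rpow_le one_lt_two (by positivity), rpow_one, le_div_iff₀ ha]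
    linarith
  have hB : a / b ≤ logb 2 ((a + b) / b) := by
    rw [add_div, div_self hb.ne', add_comm]
    exact self_le_logb_one_add (by positivity) ((div_le_one hb).2 hab)
  rw [logb_div (by positivity) ha.ne'] at hA
  rw [logb_div (by positivity) hb.ne'] at hB
  have hA' := mul_le_mul_of_nonneg_left hA ha.le
  have hB' := mul_le_mul_of_nonneg_left hB hb.le
  rw [mul_div_cancel₀ a hb.ne'] at hB'
  linarith

variable {α : Type*} [DecidableEq α]

lemma sum_card_eq_sum_memberSubfamily_add_sum_nonMemberSubfamily (x : α)
    (U : Finset (Finset α)) :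
    ∑ B ∈ U, (#B : ℝ) =
      ∑ B ∈ U.memberSubfamily x, ((#B : ℝ) + 1) + ∑ B ∈ U.nonMemberSubfamily x, (#B : ℝ) := by
  rw [← sum_filter_add_sum_filter_not U (x ∈ ·), ← image_insert_memberSubfamily,
    sum_image fun B hB C hC h ↦ ?_]
  · refine congrArg₂ _ (sum_congr rfl fun B hB ↦ ?_) rfl
    rw [card_insert_of_notMem (mem_memberSubfamily.1 hB).2, Nat.cast_succ]
  · rw [← erase_insert (mem_memberSubfamily.1 hB).2, h, erase_insert (mem_memberSubfamily.1 hC).2]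

lemma le_sum_card_of_insert_mem (V : Finset α) {U : Finset (Finset α)} (hUV : ∀ B ∈ U, B ⊆ V)
    (hU : ∀ B ∈ U, ∀ y ∈ V, insert y B ∈ U) :
    (#U : ℝ) * #V - #U * logb 2 #U / 2 ≤ ∑ B ∈ U, (#B : ℝ) := by
  induction V using Finset.induction_on generalizing U with
  | empty =>
    have hlog : 0 ≤ (#U : ℝ) * logb 2 #U :=
      mul_nonneg (Nat.cast_nonneg _) (div_nonneg (log_natCast_nonneg _) (log_nonneg one_le_two))
    have hsum : 0 ≤ ∑ B ∈ U, (#B : ℝ) := by positivity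
    simp only [card_empty, Nat.cast_zero, mul_zero, zero_sub]
    linarith
  | @insert x V hx ih =>
    have hx' : ∀ B, x ∉ B → ∀ y ∈ V, x ∉ insert y B := fun B hB y hy ↦ by
      rw [mem_insert, not_or]
      exact ⟨by rintro rfl; exact hx hy, hB⟩
    have h₁ := ih (U := U.memberSubfamily x)
      (fun B hB ↦ by
        rw [mem_memberSubfamily] at hB
        exact (insert_subset_insert_iff hB.2).1 (hUV _ hB.1))
      (fun B hB y hy ↦ by
        rw [mem_memberSubfamily] at hB ⊢
        rw [insert_comm]
        exact ⟨hU _ hB.1 y (mem_insert_of_mem hy), hx' B hB.2 y hy⟩)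
    have h₀ := ih (U := U.nonMemberSubfamily x)
      (fun B hB ↦ by
        rw [mem_nonMemberSubfamily] at hB
        exact (subset_insert_iff_of_notMem hB.2).1 (hUV _ hB.1))
      (fun B hB y hy ↦ by
        rw [mem_nonMemberSubfamily] at hB ⊢
        exact ⟨hU _ hB.1 y (mem_insert_of_mem hy), hx' B hB.2 y hy⟩)
    have hsub : U.nonMemberSubfamily x ⊆ U.memberSubfamily x := fun B hB ↦ by
      rw [mem_nonMemberSubfamily] at hB
      exact mem_memberSubfamily.2 ⟨hU B hB.1 x (mem_insert_self x V), hB.2⟩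
    have hent := two_mul_add_mul_logb_add_mul_logb_le (Nat.cast_nonneg #(U.nonMemberSubfamily x))
      (Nat.cast_le.2 (card_le_card hsub))
    rw [add_comm (#(U.nonMemberSubfamily x) : ℝ)] at hent
    rw [sum_card_eq_sum_memberSubfamily_add_sum_nonMemberSubfamily x, sum_add_distrib,
      ← card_memberSubfamily_add_card_nonMemberSubfamily x U, card_insert_of_notMem hx]
    push_cast
    simp only [sum_const, nsmul_eq_mul, mul_one]
    linarith

/-- Union-closedness of `S` survives compression as `union_mem_image`: it is what keeps the
intervals `[A, φ A]` disjoint when a new direction is compressed. -/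
structure IsUpCompression (S : Finset (Finset α)) (P : Finset α) (φ : Finset α → Finset α) :
    Prop where
  subset_apply : ∀ A ∈ S, A ⊆ φ A
  apply_subset_union : ∀ A ∈ S, φ A ⊆ A ∪ P
  union_mem_image : ∀ A ∈ S, ∀ B ∈ S, φ A ∪ B ∈ S.image φ
  insert_mem_image : ∀ y ∈ P, ∀ C ∈ S.image φ, insert y C ∈ S.image φ
  eq_of_subset_of_subset : ∀ A ∈ S, ∀ B ∈ S, ∀ D, A ⊆ D → D ⊆ φ A → B ⊆ D → D ⊆ φ B → A = B

def upStep (S : Finset (Finset α)) (φ : Finset α → Finset α) (x : α) (A : Finset α) :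
    Finset α :=
  if insert x (φ A) ∈ S.image φ then φ A else insert x (φ A)

variable {S : Finset (Finset α)} {P : Finset α} {φ : Finset α → Finset α} {x : α}
  {A B C D V : Finset α}

lemma IsUpCompression.apply_subset (h : IsUpCompression S V φ) (hV : ∀ A ∈ S, A ⊆ V)
    (hA : A ∈ S) : φ A ⊆ V :=
  (h.apply_subset_union A hA).trans (union_subset (hV A hA) subset_rfl)

lemma IsUpCompression.injOn (h : IsUpCompression S P φ) : Set.InjOn φ S := fun A hA B hB hAB ↦
  h.eq_of_subset_of_subset A hA B hB (φ A) (h.subset_apply A hA) subset_rfl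
    (hAB ▸ h.subset_apply B hB) hAB.le

lemma upStep_of_mem (h : insert x (φ A) ∈ S.image φ) : upStep S φ x A = φ A := if_pos h

lemma upStep_of_notMem (h : insert x (φ A) ∉ S.image φ) : upStep S φ x A = insert x (φ A) :=
  if_neg h

lemma subset_upStep : φ A ⊆ upStep S φ x A := by
  unfold upStep; split_ifs
  exacts [subset_rfl, subset_insert x (φ A)]

lemma upStep_subset_insert : upStep S φ x A ⊆ insert x (φ A) := by
  unfold upStep; split_ifs
  exacts [subset_insert x (φ A), subset_rfl]

lemma apply_mem_image_upStep (hA : A ∈ S) (h : insert x (φ A) ∈ S.image φ) :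
    φ A ∈ S.image (upStep S φ x) :=
  upStep_of_mem h ▸ mem_image_of_mem _ hA

lemma insert_mem_image_upStep_of_mem (h : insert x C ∈ S.image φ) :
    insert x C ∈ S.image (upStep S φ x) := by
  obtain ⟨A, hA, hAC⟩ := mem_image.1 h
  rw [← hAC]
  exact apply_mem_image_upStep hA (by rwa [hAC, insert_idem])

lemma insert_apply_mem_image_upStep (hA : A ∈ S) :
    insert x (φ A) ∈ S.image (upStep S φ x) := by
  by_cases h : insert x (φ A) ∈ S.image φ
  · exact insert_mem_image_upStep_of_mem h
  · exact upStep_of_notMem h ▸ mem_image_of_mem _ hA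

namespace IsUpCompression

lemma union_mem_image_upStep (h : IsUpCompression S P φ) (hA : A ∈ S) (hB : B ∈ S) :
    upStep S φ x A ∪ B ∈ S.image (upStep S φ x) := by
  obtain ⟨A₀, hA₀, hA₀AB⟩ := mem_image.1 (h.union_mem_image A hA B hB)
  by_cases hx : insert x (φ A) ∈ S.image φ
  · obtain ⟨C₀, hC₀, hC₀A⟩ := mem_image.1 hx
    rw [upStep_of_mem hx, ← hA₀AB]
    refine apply_mem_image_upStep hA₀ ?_
    rw [hA₀AB, ← insert_union, ← hC₀A]
    exact h.union_mem_image C₀ hC₀ B hB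
  · rw [upStep_of_notMem hx, insert_union, ← hA₀AB]
    exact insert_apply_mem_image_upStep hA₀

lemma insert_mem_image_upStep (h : IsUpCompression S P φ) {y : α} (hy : y ∈ insert x P)
    (hC : C ∈ S.image (upStep S φ x)) : insert y C ∈ S.image (upStep S φ x) := by
  obtain ⟨A, hA, rfl⟩ := mem_image.1 hC
  by_cases hx : insert x (φ A) ∈ S.image φ
  · rw [upStep_of_mem hx]
    obtain rfl | hyP := mem_insert.1 hy
    · exact insert_apply_mem_image_upStep hA
    obtain ⟨A₀, hA₀, hA₀A⟩ := mem_image.1 (h.insert_mem_image y hyP _ (mem_image_of_mem φ hA))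
    rw [← hA₀A]
    refine apply_mem_image_upStep hA₀ ?_
    rw [hA₀A, insert_comm]
    exact h.insert_mem_image y hyP _ hx
  · rw [upStep_of_notMem hx]
    obtain rfl | hyP := mem_insert.1 hy
    · rw [insert_idem, ← upStep_of_notMem hx]
      exact mem_image_of_mem _ hA
    obtain ⟨A₀, hA₀, hA₀A⟩ := mem_image.1 (h.insert_mem_image y hyP _ (mem_image_of_mem φ hA))
    rw [insert_comm, ← hA₀A]
    exact insert_apply_mem_image_upStep hA₀

lemma insert_apply_mem_image_of_subset (h : IsUpCompression S P φ) (hx : x ∉ P)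
    (hA : A ∈ S) (hB : B ∈ S) (hxD : x ∈ D)
    (hAD : A ⊆ D) (hDA : D ⊆ φ A) (hDB : D ⊆ upStep S φ x B) :
    insert x (φ B) ∈ S.image φ := by
  by_contra hBx
  have hxA : x ∈ A := by
    simpa [hx] using h.apply_subset_union A hA (hDA hxD)
  rw [upStep_of_notMem hBx] at hDB
  have : insert x (φ B) = φ B ∪ A :=
    (insert_subset (mem_union_right _ hxA) subset_union_left).antisymm
      (union_subset (subset_insert x (φ B)) (hAD.trans hDB))
  exact hBx (this ▸ h.union_mem_image B hB A hA)

lemma notMem_of_insert_notMem_image (h : IsUpCompression S P φ) (hA : A ∈ S)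
    (hAx : insert x (φ A) ∉ S.image φ) : x ∉ A := fun hxA ↦
  hAx (by rw [insert_eq_of_mem (h.subset_apply A hA hxA)]; exact mem_image_of_mem φ hA)

lemma eq_of_subset_of_subset_upStep (h : IsUpCompression S P φ) (hx : x ∉ P)
    (hA : A ∈ S) (hB : B ∈ S) (hAD : A ⊆ D) (hDA : D ⊆ upStep S φ x A) (hBD : B ⊆ D)
    (hDB : D ⊆ upStep S φ x B) : A = B := by
  by_cases hxD : x ∈ D
  swap
  · exact h.eq_of_subset_of_subset A hA B hB D hAD
      ((subset_insert_iff_of_notMem hxD).1 (hDA.trans upStep_subset_insert)) hBD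
      ((subset_insert_iff_of_notMem hxD).1 (hDB.trans upStep_subset_insert))
  by_cases hAx : insert x (φ A) ∈ S.image φ
  · rw [upStep_of_mem hAx] at hDA
    have hBx := h.insert_apply_mem_image_of_subset hx hA hB hxD hAD hDA hDB
    rw [upStep_of_mem hBx] at hDB
    exact h.eq_of_subset_of_subset A hA B hB D hAD hDA hBD hDB
  have hBx : insert x (φ B) ∉ S.image φ := fun hBx ↦
    hAx <| h.insert_apply_mem_image_of_subset hx hB hA hxD hBD
      (by rwa [upStep_of_mem hBx] at hDB) hDA
  rw [upStep_of_notMem hAx] at hDA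
  rw [upStep_of_notMem hBx] at hDB
  exact h.eq_of_subset_of_subset A hA B hB (D.erase x)
    (subset_erase.2 ⟨hAD, h.notMem_of_insert_notMem_image hA hAx⟩) (subset_insert_iff.1 hDA)
    (subset_erase.2 ⟨hBD, h.notMem_of_insert_notMem_image hB hBx⟩) (subset_insert_iff.1 hDB)

lemma upStep (h : IsUpCompression S P φ) (hx : x ∉ P) :
    IsUpCompression S (insert x P) (upStep S φ x) where
  subset_apply A hA := (h.subset_apply A hA).trans subset_upStep
  apply_subset_union A hA := upStep_subset_insert.trans <| by
    rw [union_insert]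
    exact insert_subset_insert x (h.apply_subset_union A hA)
  union_mem_image A hA B hB := h.union_mem_image_upStep hA hB
  insert_mem_image _ hy _ hC := h.insert_mem_image_upStep hy hC
  eq_of_subset_of_subset A hA B hB _ := h.eq_of_subset_of_subset_upStep hx hA hB

end IsUpCompression

lemma isUpCompression_id (hS : ∀ A ∈ S, ∀ B ∈ S, A ∪ B ∈ S) : IsUpCompression S ∅ id where
  subset_apply _ _ := subset_rfl
  apply_subset_union _ _ := by simp
  union_mem_image A hA B hB := by simpa using hS A hA B hB
  insert_mem_image _ hy := absurd hy (notMem_empty _)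
  eq_of_subset_of_subset _ _ _ _ _ hAD hDA hBD hDB :=
    (hAD.antisymm hDA).trans (hBD.antisymm hDB).symm

lemma exists_isUpCompression (hS : ∀ A ∈ S, ∀ B ∈ S, A ∪ B ∈ S) (V : Finset α) :
    ∃ φ, IsUpCompression S V φ := by
  induction V using Finset.induction_on with
  | empty => exact ⟨id, isUpCompression_id hS⟩
  | insert x V hx ih =>
    obtain ⟨φ, hφ⟩ := ih
    exact ⟨_, hφ.upStep hx⟩

lemma IsUpCompression.sum_two_pow_card_sdiff_le (h : IsUpCompression S V φ)
    (hV : ∀ A ∈ S, A ⊆ V) : ∑ A ∈ S, 2 ^ #(φ A \ A) ≤ 2 ^ #V := by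
  have hdisj : (S : Set (Finset α)).PairwiseDisjoint fun A ↦ Icc A (φ A) := by
    intro A hA B hB hAB
    refine disjoint_left.2 fun D hDA hDB ↦ hAB ?_
    rw [mem_Icc] at hDA hDB
    exact h.eq_of_subset_of_subset A hA B hB D hDA.1 hDA.2 hDB.1 hDB.2
  have hsub : S.biUnion (fun A ↦ Icc A (φ A)) ⊆ V.powerset := by
    intro D hD
    obtain ⟨A, hA, hD⟩ := mem_biUnion.1 hD
    exact mem_powerset.2 ((mem_Icc.1 hD).2.trans (h.apply_subset hV hA))
  calc ∑ A ∈ S, 2 ^ #(φ A \ A) = ∑ A ∈ S, #(Icc A (φ A)) :=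
        sum_congr rfl fun A hA ↦ by
          rw [card_Icc_finset (h.subset_apply A hA), card_sdiff_of_subset (h.subset_apply A hA)]
    _ = #(S.biUnion fun A ↦ Icc A (φ A)) := (card_biUnion hdisj).symm
    _ ≤ 2 ^ #V := card_powerset V ▸ card_le_card hsub

lemma sum_le_card_mul_sub_of_sum_two_pow_le {ι : Type*} {t : Finset ι} (d : ι → ℕ) {n : ℕ}
    (h : ∑ i ∈ t, (2 : ℝ) ^ d i ≤ 2 ^ n) :
    ∑ i ∈ t, (d i : ℝ) ≤ #t * n - #t * logb 2 #t := by
  obtain rfl | ht := t.eq_empty_or_nonempty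
  · simp
  have hm : (0 : ℝ) < #t := by exact_mod_cast ht.card_pos
  have hjensen := strictConcaveOn_log_Ioi.concaveOn.le_map_sum (t := t)
    (w := fun _ ↦ (#t : ℝ)⁻¹) (p := fun i ↦ (2 : ℝ) ^ d i) (fun _ _ ↦ by positivity)
    (by simp [hm.ne']) (fun _ _ ↦ by simp)
  simp only [smul_eq_mul, ← mul_sum, Real.log_pow] at hjensen
  have hlog : log ((#t : ℝ)⁻¹ * ∑ i ∈ t, (2 : ℝ) ^ d i) ≤ n * log 2 - log #t := by
    calc _ ≤ log ((#t : ℝ)⁻¹ * 2 ^ n) := log_le_log (by positivity) (by gcongr)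
      _ = n * log 2 - log #t := by
        rw [log_mul (by positivity) (by positivity), log_inv, log_pow]
        ring
  rw [← sum_mul, inv_mul_eq_div, div_le_iff₀ hm] at hjensen
  have hlog2 : 0 < log 2 := log_pos one_lt_two
  refine le_of_mul_le_mul_right ?_ hlog2
  rw [sub_mul, mul_assoc _ (logb 2 _), logb, div_mul_cancel₀ _ hlog2.ne']
  linarith [mul_le_mul_of_nonneg_left hlog hm.le]

theorem card_mul_logb_card_div_two_le_sum_card (hS : ∀ A ∈ S, ∀ B ∈ S, A ∪ B ∈ S) :
    (#S : ℝ) * logb 2 #S / 2 ≤ ∑ A ∈ S, (#A : ℝ) := by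
  have hV : ∀ A ∈ S, A ⊆ S.sup id := fun A hA ↦ le_sup (f := id) hA
  obtain ⟨φ, hφ⟩ := exists_isUpCompression hS (S.sup id)
  have hupset := le_sum_card_of_insert_mem (S.sup id) (U := S.image φ)
    (fun B hB ↦ by obtain ⟨A, hA, rfl⟩ := mem_image.1 hB; exact hφ.apply_subset hV hA)
    (fun B hB y hy ↦ hφ.insert_mem_image y hy B hB)
  rw [card_image_of_injOn hφ.injOn, sum_image hφ.injOn] at hupset
  have hcube := sum_le_card_mul_sub_of_sum_two_pow_le (fun A ↦ #(φ A \ A))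
    (by exact_mod_cast hφ.sum_two_pow_card_sdiff_le hV)
  have hsplit : ∑ A ∈ S, (#(φ A) : ℝ) = ∑ A ∈ S, (#A : ℝ) + ∑ A ∈ S, (#(φ A \ A) : ℝ) := by
    rw [← sum_add_distrib]
    refine sum_congr rfl fun A hA ↦ ?_
    rw [← Nat.cast_add, add_comm, card_sdiff_add_card_eq_card (hφ.subset_apply A hA)]
  linarith

end UnionClosed

/-- `l`-fold weight version of Reimer's theorem: for a union-closed family `S`
with `|S| = m ≥ 2` and `(log₂ m)/2 ≥ l - 1`, we have
`∑_{A ∈ S} C(|A|, l) ≥ m · C((log₂ m)/2, l)`, where the generalized binomial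
coefficient is `C(x, l) = x(x-1)⋯(x-l+1)/l!`. -/
theorem unionClosed_lfold_weight_bound {α : Type*} [DecidableEq α]
    (l : ℕ) (hl : 1 ≤ l) (S : Finset (Finset α)) (m : ℕ)
    (hm : S.card = m) (hm2 : 2 ≤ m)
    (hlog : ((l : ℝ) - 1) ≤ Real.logb 2 m / 2)
    (huc : ∀ A ∈ S, ∀ B ∈ S, A ∪ B ∈ S) :
    (m : ℝ) * ((1 : ℝ) / (Nat.factorial l)) *
        ∏ i ∈ Finset.range l, (Real.logb 2 m / 2 - (i : ℝ))
      ≤ ∑ A ∈ S, ((A.card.choose l : ℕ) : ℝ) := by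
  subst hm
  have hS : (0 : ℝ) < S.card := by exact_mod_cast (by omega : 0 < S.card)
  have hLavg : Real.logb 2 S.card / 2 ≤ ∑ A ∈ S, (S.card : ℝ)⁻¹ * A.card := by
    rw [← Finset.mul_sum, le_inv_mul_iff₀ hS, ← mul_div_assoc]
    exact UnionClosed.card_mul_logb_card_div_two_le_sum_card huc
  have hmono : (descPochhammer ℝ l).eval (Real.logb 2 S.card / 2) ≤
      (descPochhammer ℝ l).eval (∑ A ∈ S, (S.card : ℝ)⁻¹ * A.card) :=
    monotoneOn_descPochhammer_eval l hlog (hlog.trans hLavg) hLavg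
  have hjensen := descPochhammer_eval_div_factorial_le_sum_choose (by omega : l ≠ 0)
    (t := S) (fun A ↦ A.card) (fun _ ↦ (S.card : ℝ)⁻¹) (fun _ _ ↦ by positivity)
    (by simp [hS.ne']) (hlog.trans hLavg)
  rw [descPochhammer_eval_eq_prod_range] at hmono
  calc (S.card : ℝ) * (1 / l.factorial) * ∏ i ∈ Finset.range l, (Real.logb 2 S.card / 2 - i)
      ≤ S.card *
          ((descPochhammer ℝ l).eval (∑ A ∈ S, (S.card : ℝ)⁻¹ * A.card) / l.factorial) := by
        rw [mul_assoc, one_div_mul_eq_div]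
        gcongr
    _ ≤ S.card * ∑ A ∈ S, (S.card : ℝ)⁻¹ * ((A.card.choose l : ℕ) : ℝ) := by gcongr
    _ = ∑ A ∈ S, ((A.card.choose l : ℕ) : ℝ) := by rw [← Finset.mul_sum]; field_simp
end

section
/- Let l ≥ 1, let t ≥ 2, and let b = b_1 > b_2 > ... > b_t ≥ 0 be integers, and set m = ∑_{i=1}^t 2^{b_i}. Then ∑_{i=1}^t ( C(b_i, l)·2^{b_i}/2^l + C(b_i, l−1)·2^{b_i}/2^{l−1} ) < (1 + 2l/log₂ m) · (m/l!) · ((log₂ m)/2)^l. -/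
/-! Every `b i` is at most `b 1`, and `b 1 < log₂ m` because `m > 2 ^ b 1`. Since
`C(n, k) / 2 ^ k ≤ (N / 2) ^ k / k!` for `n ≤ N`, each summand is at most
`2 ^ (b i) · ((b 1 / 2) ^ l / l! + (b 1 / 2) ^ (l - 1) / (l - 1)!)`, so the sum is at most
`m` times this bracket, which is strictly increasing in `b 1`. Replacing `b 1` by `log₂ m`
gives exactly the right-hand side, since
`(2l / L) · (L / 2) ^ l / l! = (L / 2) ^ (l - 1) / (l - 1)!`. -/

open Finset

lemma choose_div_two_pow_le {n N : ℕ} (k : ℕ) (h : n ≤ N) :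
    (n.choose k : ℝ) / 2 ^ k ≤ ((N : ℝ) / 2) ^ k / k.factorial := by
  calc (n.choose k : ℝ) / 2 ^ k ≤ (n : ℝ) ^ k / k.factorial / 2 ^ k := by
        gcongr; exact Nat.choose_le_pow_div k n
    _ ≤ (N : ℝ) ^ k / k.factorial / 2 ^ k := by gcongr
    _ = ((N : ℝ) / 2) ^ k / k.factorial := by rw [div_pow]; ring

lemma pow_div_factorial_add_lt {x y : ℝ} {l : ℕ} (hl : 1 ≤ l) (hx : 0 ≤ x) (hxy : x < y) :
    (x / 2) ^ l / l.factorial + (x / 2) ^ (l - 1) / (l - 1).factorial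
      < (y / 2) ^ l / l.factorial + (y / 2) ^ (l - 1) / (l - 1).factorial := by
  have hl0 : l ≠ 0 := by omega
  exact add_lt_add_of_lt_of_le (by gcongr) (by gcongr)

lemma one_add_mul_div_factorial_mul_pow_eq {l : ℕ} (hl : 1 ≤ l) {L : ℝ} (hL : L ≠ 0)
    (x : ℝ) :
    (1 + 2 * (l : ℝ) / L) * (x / l.factorial) * (L / 2) ^ l
      = x * ((L / 2) ^ l / l.factorial + (L / 2) ^ (l - 1) / (l - 1).factorial) := by
  obtain ⟨k, rfl⟩ : ∃ k, l = k + 1 := ⟨l - 1, by omega⟩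
  rw [Nat.add_sub_cancel, Nat.factorial_succ, pow_succ]
  push_cast
  field_simp

lemma sum_choose_mul_two_pow_le {ι : Type*} {s : Finset ι} {b : ι → ℕ} {B : ℕ}
    (hB : ∀ i ∈ s, b i ≤ B) (l : ℕ) :
    ∑ i ∈ s, (((b i).choose l : ℝ) * 2 ^ (b i) / 2 ^ l
        + ((b i).choose (l - 1) : ℝ) * 2 ^ (b i) / 2 ^ (l - 1))
      ≤ (∑ i ∈ s, (2 : ℝ) ^ b i)
        * (((B : ℝ) / 2) ^ l / l.factorial + ((B : ℝ) / 2) ^ (l - 1) / (l - 1).factorial) := by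
  rw [sum_mul]
  refine sum_le_sum fun i hi => ?_
  have h₁ := choose_div_two_pow_le l (hB i hi)
  have h₂ := choose_div_two_pow_le (l - 1) (hB i hi)
  calc ((b i).choose l : ℝ) * 2 ^ (b i) / 2 ^ l
        + ((b i).choose (l - 1) : ℝ) * 2 ^ (b i) / 2 ^ (l - 1)
      = 2 ^ b i * (((b i).choose l : ℝ) / 2 ^ l
          + ((b i).choose (l - 1) : ℝ) / 2 ^ (l - 1)) := by
        ring
    _ ≤ _ := by gcongr

lemma natCast_lt_logb_two {n m : ℕ} (h : 2 ^ n < m) : (n : ℝ) < Real.logb 2 m := by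
  have hm : (0 : ℝ) < m := by exact_mod_cast (Nat.zero_lt_of_lt h)
  rw [Real.lt_logb_iff_rpow_lt one_lt_two hm, Real.rpow_natCast]
  exact_mod_cast h

/-- `l`-fold weight bound for the base family: if `l ≥ 1`, `t ≥ 2`,
`b 1 > b 2 > … > b t ≥ 0` and `m = ∑ᵢ 2 ^ (b i)`, then
`∑ᵢ ( C(b i, l)·2^(b i)/2^l + C(b i, l-1)·2^(b i)/2^(l-1) )
  < (1 + 2l/log₂ m) · (m/l!) · ((log₂ m)/2)^l`. -/
theorem base_family_lfold_weight_bound (l t : ℕ) (hl : 1 ≤ l) (ht : 2 ≤ t)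
    (b : ℕ → ℕ) (hdec : ∀ i j : ℕ, 1 ≤ i → i < j → j ≤ t → b j < b i)
    (m : ℕ) (hm : m = ∑ i ∈ Finset.Icc 1 t, 2 ^ b i) :
    ∑ i ∈ Finset.Icc 1 t,
        (((b i).choose l : ℝ) * (2 : ℝ) ^ (b i) / (2 : ℝ) ^ l
          + ((b i).choose (l - 1) : ℝ) * (2 : ℝ) ^ (b i) / (2 : ℝ) ^ (l - 1))
      < (1 + 2 * (l : ℝ) / Real.logb 2 m) * ((m : ℝ) / (Nat.factorial l))
          * (Real.logb 2 m / 2) ^ l := by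
  have hb_le : ∀ i ∈ Icc 1 t, b i ≤ b 1 := fun i hi => by
    obtain ⟨h1, hit⟩ := mem_Icc.mp hi
    rcases h1.eq_or_lt with rfl | h1
    · rfl
    · exact (hdec 1 i le_rfl h1 hit).le
  have hm_gt : 2 ^ b 1 < m := by
    rw [hm]
    exact single_lt_sum (f := fun i => 2 ^ b i) (i := 1) (j := 2) (by omega)
      (mem_Icc.mpr ⟨le_rfl, by omega⟩) (mem_Icc.mpr ⟨by omega, ht⟩) Nat.one_le_two_pow
      fun _ _ _ => Nat.zero_le _
  have hm_cast : ∑ i ∈ Icc 1 t, (2 : ℝ) ^ b i = m := by rw [hm]; push_cast; rfl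
  have hlog := natCast_lt_logb_two hm_gt
  set L := Real.logb 2 m
  calc _ ≤ (m : ℝ) * ((b 1 / 2 : ℝ) ^ l / l.factorial
          + (b 1 / 2 : ℝ) ^ (l - 1) / (l - 1).factorial) :=
        hm_cast ▸ sum_choose_mul_two_pow_le hb_le l
    _ < m * ((L / 2) ^ l / l.factorial + (L / 2) ^ (l - 1) / (l - 1).factorial) :=
        mul_lt_mul_of_pos_left (pow_div_factorial_add_lt hl (Nat.cast_nonneg _) hlog)
          (by exact_mod_cast Nat.zero_lt_of_lt hm_gt)
    _ = _ :=
        (one_add_mul_div_factorial_mul_pow_eq hl ((Nat.cast_nonneg _).trans_lt hlog).ne' _).symm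
end

section
/- Let l ≥ 1 and let S be a separating union-closed family of subsets of an n-element set Ω with l ≤ n. For an l-element subset X ⊆ Ω, let d_S(X) denote the number of members of S containing X. Then the average of d_S(X) over all l-element subsets X of Ω satisfies (1/C(n,l)) · ∑_{X ⊆ Ω, |X| = l} d_S(X) ≥ (n − l)/(l + 1). -/
/-!
Separation and union-closedness give, for every `(l+1)`-subset `Y` of `Ω`, a member of `S`
missing exactly one point of `Y`; enlarge it to the largest member `A` of `S` whose trace on `Y`
is contained in the original one. Then `Y ↦ (Y ∩ A, A)` sends `(l+1)`-sets injectively to pairs `X ⊆ A ∈ S` with `|X| = l`: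
if `X ∪ {y}` and `X ∪ {y'}` both had image `(X, A)`, a member of `S` containing `y` but not `y'`
would have to lie in `A`, although `y ∉ A`. Hence `C(n, l+1) ≤ ∑_X d_S(X)`, and
`C(n, l+1) / C(n, l) = (n - l) / (l + 1)`.
-/

open Finset

def SeparatesPoints {α : Type*} (S : Finset (Finset α)) (Ω : Finset α) : Prop :=
  ∀ i ∈ Ω, ∀ j ∈ Ω, i ≠ j → ∃ A ∈ S, (i ∈ A ∧ j ∉ A) ∨ (j ∈ A ∧ i ∉ A)

theorem SeparatesPoints.mono {α : Type*} {S : Finset (Finset α)} {Ω Y : Finset α}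
    (hsep : SeparatesPoints S Ω) (hY : Y ⊆ Ω) : SeparatesPoints S Y :=
  fun i hi j hj => hsep i (hY hi) j (hY hj)

theorem SupClosed.exists_isGreatest {β : Type*} [SemilatticeSup β] {t : Finset β}
    (ht : SupClosed (t : Set β)) (hne : t.Nonempty) : ∃ a, IsGreatest (t : Set β) a :=
  ⟨t.sup' hne id, ht.finsetSup'_mem hne fun _ => id, fun _ hb => le_sup' id hb⟩

section UnionClosed

variable {α : Type*} [DecidableEq α] {S : Finset (Finset α)}

theorem exists_mem_card_sdiff_eq_one {Y : Finset α} (huc : SupClosed (S : Set (Finset α)))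
    (hsep : SeparatesPoints S Y) (hY : 2 ≤ #Y) : ∃ A ∈ S, #(Y \ A) = 1 := by
  obtain ⟨y, hy, y', hy', hne⟩ := one_lt_card.mp hY
  have hT : (S.filter fun A => (Y \ A).Nonempty).Nonempty := by
    obtain ⟨B, hB, hsepB⟩ := hsep y hy y' hy' hne
    refine ⟨B, mem_filter.mpr ⟨hB, ?_⟩⟩
    rcases hsepB with ⟨-, h⟩ | ⟨-, h⟩
    exacts [⟨y', mem_sdiff.mpr ⟨hy', h⟩⟩, ⟨y, mem_sdiff.mpr ⟨hy, h⟩⟩]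
  obtain ⟨A, hA, hmin⟩ := exists_min_image _ (fun A => #(Y \ A)) hT
  rw [mem_filter] at hA
  have shrink : ∀ z ∈ Y \ A, ∀ w ∈ Y \ A, ∀ B ∈ S, z ∈ B → w ∉ B → False := by
    intro z hz w hw B hB hzB hwB
    have hAB : A ∪ B ∈ S.filter fun A => (Y \ A).Nonempty :=
      mem_filter.mpr ⟨huc hA.1 hB, w, by simp_all⟩
    have hlt : Y \ (A ∪ B) ⊂ Y \ A :=
      ssubset_iff_of_subset (sdiff_subset_sdiff subset_rfl subset_union_left) |>.mpr
        ⟨z, hz, by simp_all⟩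
    exact (card_lt_card hlt).not_ge (hmin _ hAB)
  refine ⟨A, hA.1, le_antisymm ?_ hA.2.card_pos⟩
  by_contra! h
  obtain ⟨z, hz, w, hw, hzw⟩ := one_lt_card.mp h
  obtain ⟨B, hB, hsepB⟩ := hsep z (mem_sdiff.mp hz).1 w (mem_sdiff.mp hw).1 hzw
  rcases hsepB with ⟨hzB, hwB⟩ | ⟨hwB, hzB⟩
  exacts [shrink z hz w hw B hB hzB hwB, shrink w hw z hz B hB hwB hzB]

theorem exists_maximal_mem_card_sdiff_eq_one {Y : Finset α}
    (huc : SupClosed (S : Set (Finset α))) (hsep : SeparatesPoints S Y) (hY : 2 ≤ #Y) :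
    ∃ A ∈ S, #(Y \ A) = 1 ∧ ∀ B ∈ S, B ∩ Y ⊆ A → B ⊆ A := by
  obtain ⟨A₀, hA₀, hcard⟩ := exists_mem_card_sdiff_eq_one huc hsep hY
  have hT : SupClosed ((S.filter fun B => B ∩ Y ⊆ A₀ : Finset _) : Set (Finset α)) := by
    intro B hB C hC
    rw [mem_coe, mem_filter] at hB hC ⊢
    rw [sup_eq_union, union_inter_distrib_right]
    exact ⟨huc hB.1 hC.1, union_subset hB.2 hC.2⟩
  obtain ⟨A, hAT, hAmax⟩ := hT.exists_isGreatest ⟨A₀, mem_filter.mpr ⟨hA₀, inter_subset_left⟩⟩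
  rw [mem_coe, mem_filter] at hAT
  have hA₀A : A₀ ⊆ A := hAmax (mem_filter.mpr ⟨hA₀, inter_subset_left⟩)
  have hsdiff : Y \ A = Y \ A₀ := by
    refine (sdiff_subset_sdiff subset_rfl hA₀A).antisymm fun y hy => ?_
    simp only [mem_sdiff] at hy ⊢
    exact ⟨hy.1, fun hyA => hy.2 (hAT.2 (mem_inter.mpr ⟨hyA, hy.1⟩))⟩
  refine ⟨A, hAT.1, hsdiff ▸ hcard, fun B hB hBA => hAmax ?_⟩
  exact mem_filter.mpr ⟨hB, (subset_inter hBA inter_subset_right).trans hAT.2⟩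

theorem subset_of_sdiff_eq_singleton {A B Y : Finset α} {y : α}
    (hmax : ∀ B ∈ S, B ∩ Y ⊆ A → B ⊆ A) (hY : Y \ A = {y}) (hB : B ∈ S) (hyB : y ∉ B) :
    B ⊆ A := by
  refine hmax B hB fun x hx => ?_
  by_contra hxA
  have hxy : x ∈ Y \ A := mem_sdiff.mpr ⟨(mem_inter.mp hx).2, hxA⟩
  rw [hY, mem_singleton] at hxy
  exact hyB (hxy ▸ (mem_inter.mp hx).1)

theorem eq_of_sdiff_eq_singleton_of_inter_eq {A Y₁ Y₂ : Finset α} {y₁ y₂ : α}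
    (hsep : SeparatesPoints S (Y₁ ∪ Y₂))
    (hmax₁ : ∀ B ∈ S, B ∩ Y₁ ⊆ A → B ⊆ A) (hmax₂ : ∀ B ∈ S, B ∩ Y₂ ⊆ A → B ⊆ A)
    (h₁ : Y₁ \ A = {y₁}) (h₂ : Y₂ \ A = {y₂}) (hinter : Y₁ ∩ A = Y₂ ∩ A) : Y₁ = Y₂ := by
  have hy₁ : y₁ ∈ Y₁ \ A := h₁ ▸ mem_singleton_self _
  have hy₂ : y₂ ∈ Y₂ \ A := h₂ ▸ mem_singleton_self _
  rw [mem_sdiff] at hy₁ hy₂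
  suffices y₁ = y₂ by
    rw [← sdiff_union_inter Y₁ A, ← sdiff_union_inter Y₂ A, h₁, h₂, hinter, this]
  by_contra hne
  obtain ⟨B, hB, hsepB⟩ :=
    hsep y₁ (mem_union_left _ hy₁.1) y₂ (mem_union_right _ hy₂.1) hne
  rcases hsepB with ⟨hy₁B, hy₂B⟩ | ⟨hy₂B, hy₁B⟩
  · exact hy₁.2 (subset_of_sdiff_eq_singleton hmax₂ h₂ hB hy₂B hy₁B)
  · exact hy₂.2 (subset_of_sdiff_eq_singleton hmax₁ h₁ hB hy₁B hy₂B)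

theorem card_powersetCard_succ_le_sum_card_filter_subset {Ω : Finset α} {l : ℕ} (hl : 1 ≤ l)
    (huc : SupClosed (S : Set (Finset α))) (hsep : SeparatesPoints S Ω) :
    #(Ω.powersetCard (l + 1)) ≤ ∑ X ∈ Ω.powersetCard l, #(S.filter fun A => X ⊆ A) := by
  have key : ∀ Y ∈ Ω.powersetCard (l + 1),
      ∃ A ∈ S, #(Y \ A) = 1 ∧ ∀ B ∈ S, B ∩ Y ⊆ A → B ⊆ A := by
    intro Y hY
    rw [mem_powersetCard] at hY
    exact exists_maximal_mem_card_sdiff_eq_one huc (hsep.mono hY.1) (by omega)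
  choose! f hfS hf₁ hfmax using key
  rw [← card_sigma]
  refine card_le_card_of_injOn (fun Y => ⟨Y ∩ f Y, f Y⟩) (fun Y hY => ?_)
    (fun Y₁ hY₁ Y₂ hY₂ h => ?_)
  · have hcard := card_sdiff_add_card_inter Y (f Y)
    have hsdiff := hf₁ Y hY
    have hY' := mem_powersetCard.mp hY
    simp only [coe_sigma, Set.mem_sigma_iff, mem_coe, mem_powersetCard, mem_filter]
    exact ⟨⟨inter_subset_left.trans hY'.1, by omega⟩, hfS Y hY, inter_subset_right⟩
  · simp only [Sigma.mk.injEq, heq_eq_eq] at h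
    obtain ⟨y₁, h₁⟩ := card_eq_one.mp (hf₁ Y₁ hY₁)
    obtain ⟨y₂, h₂⟩ := card_eq_one.mp (hf₁ Y₂ hY₂)
    have hmax₁ := hfmax Y₁ hY₁
    have hmax₂ := hfmax Y₂ hY₂
    rw [mem_coe, mem_powersetCard] at hY₁ hY₂
    rw [h.2] at h₁ hmax₁ h
    exact eq_of_sdiff_eq_singleton_of_inter_eq (hsep.mono (union_subset hY₁.1 hY₂.1))
      hmax₁ hmax₂ h₁ h₂ h.1

end UnionClosed

theorem separating_unionClosed_average_lsubset_degree_general {α : Type*} [DecidableEq α]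
    (l : ℕ) (hl : 1 ≤ l) (Ω : Finset α) (n : ℕ) (hn : Ω.card = n) (hln : l ≤ n)
    (S : Finset (Finset α))
    (huc : ∀ A ∈ S, ∀ B ∈ S, A ∪ B ∈ S)
    (hsep : ∀ i ∈ Ω, ∀ j ∈ Ω, i ≠ j →
      ∃ A ∈ S, (i ∈ A ∧ j ∉ A) ∨ (j ∈ A ∧ i ∉ A)) :
    ((n : ℝ) - (l : ℝ)) / ((l : ℝ) + 1)
      ≤ (1 / (n.choose l : ℝ)) *
          ∑ X ∈ Ω.powersetCard l, ((S.filter (fun A => X ⊆ A)).card : ℝ) := by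
  have hcount := card_powersetCard_succ_le_sum_card_filter_subset hl
    (fun A hA B hB => huc A hA B hB) hsep
  rw [card_powersetCard, hn] at hcount
  have hchoose : (n.choose (l + 1) : ℝ) * (l + 1) = n.choose l * (n - l) := by
    exact_mod_cast Nat.choose_succ_right_eq n l
  have hpos : (0 : ℝ) < n.choose l := by exact_mod_cast Nat.choose_pos hln
  rw [one_div_mul_eq_div]
  calc ((n : ℝ) - l) / (l + 1) = n.choose (l + 1) / n.choose l := by
        rw [div_eq_div_iff (by positivity) hpos.ne']; linarith
    _ ≤ _ := by gcongr; exact_mod_cast hcount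

/-- Average over `l`-subsets: for a separating union-closed family `S` of
subsets of an `n`-element set `Ω` (with `1 ≤ l ≤ n`), the average over all
`l`-element subsets `X ⊆ Ω` of the number of members of `S` containing `X`
is at least `(n - l)/(l + 1)`. -/
theorem separating_unionClosed_average_lsubset_degree {α : Type*} [DecidableEq α]
    (l : ℕ) (hl : 1 ≤ l) (Ω : Finset α) (n : ℕ) (hn : Ω.card = n) (hln : l ≤ n)
    (S : Finset (Finset α))
    (hsub : ∀ A ∈ S, A ⊆ Ω)
    (huc : ∀ A ∈ S, ∀ B ∈ S, A ∪ B ∈ S)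
    (hsep : ∀ i ∈ Ω, ∀ j ∈ Ω, i ≠ j →
      ∃ A ∈ S, (i ∈ A ∧ j ∉ A) ∨ (j ∈ A ∧ i ∉ A)) :
    ((n : ℝ) - (l : ℝ)) / ((l : ℝ) + 1)
      ≤ (1 / (n.choose l : ℝ)) *
          ∑ X ∈ Ω.powersetCard l, ((S.filter (fun A => X ⊆ A)).card : ℝ) :=
  separating_unionClosed_average_lsubset_degree_general l hl Ω n hn hln S huc hsep
end
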